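/- arXiv:1501.03107 — 6 statements merged into one kernel-verified Lean document; each statement's English description precedes it below -/
import Mathlib

section
/- Let Ω be a finite set equipped with a symmetric neighbor relation ~ under which Ω is connected, and let d be a path metric compatible with ~, i.e. d(x,y) ≥ 1 whenever x ≠ y and d(x,y) = min over all neighbor-to-neighbor paths x = x₀ ~ x₁ ~ … ~ x_r = y of Σ_{i=1}^r d(x_{i−1}, x_i). Let P be a stochastic matrix on Ω with stationary distribution π. Suppose that for every neighboring pair x ~ y there exists a coupling Q_{x,y} of P(x,·) and P(y,·) (a probability distribution on Ω × Ω whose first marginal is P(x,·) and second marginal is P(y,·)) such that E_{Q_{x,y}}[d(X′,Y′)] ≤ (1 − δ) d(x,y), where δ ∈ (0,1) does not depend on x and y. Then for every t ≥ 0, max_{x∈Ω} ‖P^t(x,·) − π‖_TV ≤ (1 − δ)^t diam(Ω), where diam(Ω) = max_{x,y} d(x,y); consequently the mixing time satisfies t_mix(ε) = min{t : max_x ‖P^t(x,·) − π‖_TV ≤ ε} ≤ ⌈(log diam(Ω) − log ε)/δ⌉ for every ε ∈ (0,1). -/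
/-!
Gluing the given couplings along a shortest neighbor path from `x` to `y` (conditionally
independently given the shared middle point) couples `P(x,·)` and `P(y,·)` at mean distance
`≤ (1 - δ) d(x,y)`, by the triangle inequality. Running the chain from such a coupling and
recoupling at every step iterates the contraction, so `P^t(x,·)` and `P^t(y,·)` are coupled at
mean distance `≤ (1 - δ)^t diam Ω`. Averaging over `y ∼ π` and using stationarity couples
`P^t(x,·)` with `π`; as `d ≥ 1` off the diagonal, the total variation distance is at most the
mean distance. The mixing-time bound then follows from `1 - δ ≤ exp (-δ)`.
-/

section

open Finset Matrix

lemma Matrix.one_apply_nonneg {α : Type*} [DecidableEq α] (x a : α) :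
    0 ≤ (1 : Matrix α α ℝ) x a := by
  rw [one_apply]
  split_ifs <;> norm_num

variable {α : Type*} [Fintype α]

lemma Matrix.sum_one_apply [DecidableEq α] (x : α) : ∑ a, (1 : Matrix α α ℝ) x a = 1 := by
  simp [one_apply]

structure IsCoupling (μ ν : α → ℝ) (Q : α → α → ℝ) : Prop where
  nonneg : ∀ a b, 0 ≤ Q a b
  sum_snd : ∀ a, ∑ b, Q a b = μ a
  sum_fst : ∀ b, ∑ a, Q a b = ν b

def transportCost (d Q : α → α → ℝ) : ℝ := ∑ a, ∑ b, Q a b * d a b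

-- Conditionally independent gluing over the common marginal `ν`; where `ν b = 0` the junk
-- division is harmless, since then `Q a b = 0`.
noncomputable def gluing (Q R : α → α → ℝ) (ν : α → ℝ) (a c : α) : ℝ :=
  ∑ b, Q a b * R b c / ν b

def mixture (Q : α → α → ℝ) (C : α → α → α → α → ℝ) (a' b' : α) : ℝ :=
  ∑ a, ∑ b, Q a b * C a b a' b'

variable {μ ν ρ : α → ℝ} {Q R : α → α → ℝ}

namespace IsCoupling

lemma right_nonneg (hQ : IsCoupling μ ν Q) (b : α) : 0 ≤ ν b :=
  hQ.sum_fst b ▸ sum_nonneg fun a _ => hQ.nonneg a b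

lemma eq_zero_of_left_eq_zero (hQ : IsCoupling μ ν Q) {a : α} (ha : μ a = 0) (b : α) :
    Q a b = 0 :=
  (sum_eq_zero_iff_of_nonneg fun b _ => hQ.nonneg a b).1 ((hQ.sum_snd a).trans ha) b
    (mem_univ b)

lemma eq_zero_of_right_eq_zero (hQ : IsCoupling μ ν Q) (a : α) {b : α} (hb : ν b = 0) :
    Q a b = 0 :=
  (sum_eq_zero_iff_of_nonneg fun a _ => hQ.nonneg a b).1 ((hQ.sum_fst b).trans hb) a
    (mem_univ a)

lemma diag [DecidableEq α] (hμ : ∀ a, 0 ≤ μ a) :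
    IsCoupling μ μ fun a b => if a = b then μ a else 0 where
  nonneg a b := by split_ifs <;> simp [hμ]
  sum_snd a := by simp
  sum_fst b := by simp

lemma independent (hμ : ∀ a, 0 ≤ μ a) (hν : ∀ b, 0 ≤ ν b) (hμ1 : ∑ a, μ a = 1)
    (hν1 : ∑ b, ν b = 1) : IsCoupling μ ν fun a b => μ a * ν b where
  nonneg a b := mul_nonneg (hμ a) (hν b)
  sum_snd a := by rw [← mul_sum, hν1, mul_one]
  sum_fst b := by rw [← sum_mul, hμ1, one_mul]

lemma sum_gluing_summand_right (hQ : IsCoupling μ ν Q) (hR : IsCoupling ν ρ R)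
    (a b : α) : ∑ c, Q a b * R b c / ν b = Q a b := by
  by_cases hb : ν b = 0
  · simp [hQ.eq_zero_of_right_eq_zero a hb]
  · rw [← sum_div, ← mul_sum, hR.sum_snd, mul_div_cancel_right₀ _ hb]

lemma sum_gluing_summand_left (hQ : IsCoupling μ ν Q) (hR : IsCoupling ν ρ R)
    (b c : α) : ∑ a, Q a b * R b c / ν b = R b c := by
  by_cases hb : ν b = 0
  · simp [hR.eq_zero_of_left_eq_zero hb]
  · rw [← sum_div, ← sum_mul, hQ.sum_fst, mul_div_cancel_left₀ _ hb]

lemma gluing_summand_nonneg (hQ : IsCoupling μ ν Q) (hR : IsCoupling ν ρ R)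
    (a b c : α) : 0 ≤ Q a b * R b c / ν b :=
  div_nonneg (mul_nonneg (hQ.nonneg a b) (hR.nonneg b c)) (hQ.right_nonneg b)

lemma glue (hQ : IsCoupling μ ν Q) (hR : IsCoupling ν ρ R) :
    IsCoupling μ ρ (gluing Q R ν) where
  nonneg a c := sum_nonneg fun b _ => hQ.gluing_summand_nonneg hR a b c
  sum_snd a := by
    simp only [gluing]
    rw [sum_comm]
    simp_rw [hQ.sum_gluing_summand_right hR, hQ.sum_snd]
  sum_fst c := by
    simp only [gluing]
    rw [sum_comm]
    simp_rw [hQ.sum_gluing_summand_left hR, hR.sum_fst]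

lemma transportCost_gluing_le {d : α → α → ℝ}
    (htri : ∀ a b c, d a c ≤ d a b + d b c) (hQ : IsCoupling μ ν Q) (hR : IsCoupling ν ρ R) :
    transportCost d (gluing Q R ν) ≤ transportCost d Q + transportCost d R := by
  calc transportCost d (gluing Q R ν)
      = ∑ a, ∑ c, ∑ b, Q a b * R b c / ν b * d a c := by
        simp only [transportCost, gluing, sum_mul]
    _ ≤ ∑ a, ∑ c, ∑ b, Q a b * R b c / ν b * (d a b + d b c) := by
      gcongr with a _ c _ b _
      exacts [hQ.gluing_summand_nonneg hR a b c, htri a b c]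
    _ = ∑ a, ∑ b, (∑ c, Q a b * R b c / ν b) * d a b
          + ∑ c, ∑ b, (∑ a, Q a b * R b c / ν b) * d b c := by
      simp only [mul_add, sum_add_distrib, sum_mul]
      congr 1
      · exact sum_congr rfl fun a _ => sum_comm
      · rw [sum_comm]
        exact sum_congr rfl fun c _ => sum_comm
    _ = transportCost d Q + transportCost d R := by
      simp only [hQ.sum_gluing_summand_right hR, hQ.sum_gluing_summand_left hR, transportCost]
      rw [sum_comm (f := fun c b => R b c * d b c)]

lemma mix {K L : Matrix α α ℝ} {C : α → α → α → α → ℝ} (hQ : IsCoupling μ ν Q)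
    (hC : ∀ a b, IsCoupling (K a) (L b) (C a b)) :
    IsCoupling (μ ᵥ* K) (ν ᵥ* L) (mixture Q C) where
  nonneg a' b' := sum_nonneg fun a _ => sum_nonneg fun b _ =>
    mul_nonneg (hQ.nonneg a b) ((hC a b).nonneg a' b')
  sum_snd a' := by
    calc ∑ b', ∑ a, ∑ b, Q a b * C a b a' b' = ∑ a, ∑ b, Q a b * ∑ b', C a b a' b' := by
          simp only [mul_sum]
          rw [sum_comm_cycle, sum_comm_cycle]
      _ = ∑ a, μ a * K a a' := by
          simp_rw [(hC _ _).sum_snd, ← sum_mul, hQ.sum_snd]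
      _ = (μ ᵥ* K) a' := rfl
  sum_fst b' := by
    calc ∑ a', ∑ a, ∑ b, Q a b * C a b a' b' = ∑ b, ∑ a, Q a b * ∑ a', C a b a' b' := by
          simp only [mul_sum]
          rw [sum_comm_cycle]
          exact sum_congr rfl fun b _ => sum_comm
      _ = ∑ b, ν b * L b b' := by
          simp_rw [(hC _ _).sum_fst, ← sum_mul, hQ.sum_fst]
      _ = (ν ᵥ* L) b' := rfl

end IsCoupling

lemma transportCost_mixture_le {C : α → α → α → α → ℝ} {d f : α → α → ℝ}
    (hQ : ∀ a b, 0 ≤ Q a b) (hC : ∀ a b, transportCost d (C a b) ≤ f a b) :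
    transportCost d (mixture Q C) ≤ transportCost f Q := by
  calc transportCost d (mixture Q C)
      = ∑ a, ∑ b, Q a b * transportCost d (C a b) := by
        simp only [transportCost, mixture, sum_mul, mul_sum, mul_assoc]
        rw [sum_comm_cycle]
        exact sum_congr rfl fun a _ => sum_comm_cycle
    _ ≤ ∑ a, ∑ b, Q a b * f a b := by
      gcongr with a _ b _
      exacts [hQ a b, hC a b]
    _ = transportCost f Q := rfl

lemma IsCoupling.transportCost_const (hQ : IsCoupling μ ν Q) (k : ℝ) :
    transportCost (fun _ _ => k) Q = k * ∑ a, μ a := by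
  simp only [transportCost, mul_comm _ k, ← mul_sum, hQ.sum_snd]

lemma transportCost_diag [DecidableEq α] {d : α → α → ℝ} (hd : ∀ a, d a a = 0) :
    transportCost d (fun a b => if a = b then μ a else 0) = 0 := by
  simp [transportCost, hd]

lemma transportCost_const_mul (k : ℝ) (d Q : α → α → ℝ) :
    transportCost (fun a b => k * d a b) Q = k * transportCost d Q := by
  simp only [transportCost, mul_sum, mul_left_comm]

lemma transportCost_one_mul_one [DecidableEq α] (d : α → α → ℝ) (x y : α) :
    transportCost d (fun a b => (1 : Matrix α α ℝ) x a * (1 : Matrix α α ℝ) y b) = d x y := by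
  simp [transportCost, one_apply]

lemma IsCoupling.half_sum_abs_sub_le_transportCost [DecidableEq α] {d : α → α → ℝ}
    (hd_nonneg : ∀ a b, 0 ≤ d a b) (hd_one : ∀ a b, a ≠ b → 1 ≤ d a b)
    (hQ : IsCoupling μ ν Q) : 1 / 2 * ∑ b, |μ b - ν b| ≤ transportCost d Q := by
  set w : α → α → ℝ := fun a b => if a = b then 0 else Q a b
  have hw_nonneg : ∀ a b, 0 ≤ w a b := fun a b => by
    simp only [w]; split_ifs <;> simp [hQ.nonneg]
  have hw_le : ∀ a b, w a b ≤ Q a b * d a b := fun a b => by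
    simp only [w]
    split_ifs with h
    · exact mul_nonneg (hQ.nonneg a b) (hd_nonneg a b)
    · exact le_mul_of_one_le_right (hQ.nonneg a b) (hd_one a b h)
  have hsub : ∀ b, μ b - ν b = ∑ a, (w b a - w a b) := fun b => by
    rw [← hQ.sum_snd, ← hQ.sum_fst, ← sum_sub_distrib]
    refine sum_congr rfl fun a _ => ?_
    by_cases h : b = a
    · simp [h]
    · simp [w, h, Ne.symm h]
  calc 1 / 2 * ∑ b, |μ b - ν b| ≤ 1 / 2 * ∑ b, ∑ a, (w b a + w a b) := by
        gcongr with b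
        rw [hsub]
        refine (abs_sum_le_sum_abs _ _).trans (sum_le_sum fun a _ => ?_)
        exact abs_sub_le_iff.2 ⟨by linarith [hw_nonneg a b], by linarith [hw_nonneg b a]⟩
    _ = ∑ a, ∑ b, w a b := by
      rw [sum_congr rfl fun b _ => sum_add_distrib, sum_add_distrib,
        sum_comm (f := fun b a => w a b)]
      ring
    _ ≤ transportCost d Q := sum_le_sum fun a _ => sum_le_sum fun b _ => hw_le a b

lemma exists_isCoupling_of_chain [DecidableEq α] {N : α → α → Prop} {d : α → α → ℝ}
    (hd_self : ∀ a, d a a = 0) (htri : ∀ a b c, d a c ≤ d a b + d b c)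
    {μ : α → α → ℝ} (hμ : ∀ x a, 0 ≤ μ x a) {c : ℝ}
    (hN : ∀ x y, N x y → ∃ Q, IsCoupling (μ x) (μ y) Q ∧ transportCost d Q ≤ c * d x y)
    (p : ℕ → α) (r : ℕ) (hp : ∀ i < r, N (p i) (p (i + 1))) :
    ∃ Q, IsCoupling (μ (p 0)) (μ (p r)) Q ∧
      transportCost d Q ≤ c * ∑ i ∈ range r, d (p i) (p (i + 1)) := by
  induction r with
  | zero =>
    exact ⟨_, IsCoupling.diag (hμ (p 0)), by simp [transportCost_diag hd_self]⟩
  | succ r ih =>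
    obtain ⟨Q, hQ, hQd⟩ := ih fun i hi => hp i (Nat.lt_succ_of_lt hi)
    obtain ⟨R, hR, hRd⟩ := hN _ _ (hp r (Nat.lt_succ_self r))
    refine ⟨_, hQ.glue hR, (hQ.transportCost_gluing_le htri hR).trans ?_⟩
    rw [sum_range_succ, mul_add]
    exact add_le_add hQd hRd

lemma vecMul_pow_of_vecMul_eq [DecidableEq α] {P : Matrix α α ℝ} {π : α → ℝ} (hπ : π ᵥ* P = π)
    (t : ℕ) : π ᵥ* P ^ t = π := by
  induction t with
  | zero => exact vecMul_one π
  | succ t ih => rw [pow_succ', ← vecMul_vecMul, hπ, ih]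

lemma exists_isCoupling_pow [DecidableEq α] {P : Matrix α α ℝ} {d : α → α → ℝ} {c : ℝ}
    (hc : 0 ≤ c) (hP : ∀ x y, ∃ Q, IsCoupling (P x) (P y) Q ∧ transportCost d Q ≤ c * d x y)
    (t : ℕ) (x y : α) :
    ∃ C, IsCoupling ((P ^ t) x) ((P ^ t) y) C ∧ transportCost d C ≤ c ^ t * d x y := by
  induction t generalizing x y with
  | zero =>
    refine ⟨_, ?_, (transportCost_one_mul_one d x y).trans_le (by simp)⟩
    rw [pow_zero]
    exact .independent (one_apply_nonneg x) (one_apply_nonneg y) (sum_one_apply x)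
      (sum_one_apply y)
  | succ t ih =>
    choose C hC hCd using ih
    obtain ⟨Q, hQ, hQd⟩ := hP x y
    refine ⟨_, ?_, (transportCost_mixture_le hQ.nonneg hCd).trans ?_⟩
    · simpa only [pow_succ', mul_apply_eq_vecMul] using hQ.mix hC
    · rw [transportCost_const_mul, pow_succ, mul_assoc]
      exact mul_le_mul_of_nonneg_left hQd (pow_nonneg hc t)

lemma half_sum_abs_pow_sub_le [DecidableEq α] {P : Matrix α α ℝ} {π : α → ℝ} {d : α → α → ℝ}
    (hd_nonneg : ∀ a b, 0 ≤ d a b) (hd_one : ∀ a b, a ≠ b → 1 ≤ d a b)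
    (hπ_nonneg : ∀ a, 0 ≤ π a) (hπ_sum : ∑ a, π a = 1) (hπ : π ᵥ* P = π) {t : ℕ} {B : ℝ}
    (hP : ∀ x y, ∃ C, IsCoupling ((P ^ t) x) ((P ^ t) y) C ∧ transportCost d C ≤ B) (x : α) :
    1 / 2 * ∑ y, |(P ^ t) x y - π y| ≤ B := by
  choose C hC hCd using hP
  have hQ := IsCoupling.independent (one_apply_nonneg x) hπ_nonneg (sum_one_apply x) hπ_sum
  have hmix := hQ.mix hC
  rw [← mul_apply_eq_vecMul, one_mul, vecMul_pow_of_vecMul_eq hπ] at hmix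
  calc 1 / 2 * ∑ y, |(P ^ t) x y - π y| ≤ transportCost d (mixture _ C) :=
        hmix.half_sum_abs_sub_le_transportCost hd_nonneg hd_one
    _ ≤ transportCost (fun _ _ => B) _ := transportCost_mixture_le hQ.nonneg hCd
    _ = B := by rw [hQ.transportCost_const, sum_one_apply, mul_one]

lemma one_sub_pow_ceil_mul_le {δ D ε : ℝ} (hδ0 : 0 < δ) (hδ1 : δ ≤ 1) (hD : 0 ≤ D)
    (hε : 0 < ε) : (1 - δ) ^ ⌈(Real.log D - Real.log ε) / δ⌉₊ * D ≤ ε := by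
  rcases hD.eq_or_lt with rfl | hD
  · simpa using hε.le
  set t := ⌈(Real.log D - Real.log ε) / δ⌉₊
  have ht : Real.log D - Real.log ε ≤ δ * t := (div_le_iff₀' hδ0).1 (Nat.le_ceil _)
  calc (1 - δ) ^ t * D ≤ Real.exp (-δ) ^ t * D := by
        gcongr
        linarith [Real.add_one_le_exp (-δ)]
    _ = Real.exp (-(δ * t)) * D := by rw [← Real.exp_nat_mul]; ring_nf
    _ ≤ Real.exp (Real.log ε - Real.log D) * D := by gcongr; linarith
    _ = ε := by rw [Real.exp_sub, Real.exp_log hε, Real.exp_log hD, div_mul_cancel₀ _ hD.ne']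

end

theorem path_coupling_theorem_general
    {Ω : Type*} [Fintype Ω] [DecidableEq Ω]
    (N : Ω → Ω → Prop)
    (d : Ω → Ω → ℝ)
    (hd_self : ∀ x, d x x = 0)
    (hd_tri : ∀ x y z, d x z ≤ d x y + d y z)
    (hd_one : ∀ x y : Ω, x ≠ y → 1 ≤ d x y)
    -- `d` is a path metric: some neighbor-to-neighbor path realizes `d x y` ...
    (hpath : ∀ x y : Ω, ∃ (r : ℕ) (p : ℕ → Ω), p 0 = x ∧ p r = y ∧
        (∀ i < r, N (p i) (p (i + 1))) ∧
        d x y = ∑ i ∈ Finset.range r, d (p i) (p (i + 1)))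
    (P : Matrix Ω Ω ℝ)
    (hP_nonneg : ∀ x y, 0 ≤ P x y)
    (π : Ω → ℝ) (hπ_nonneg : ∀ x, 0 ≤ π x) (hπ_sum : ∑ x, π x = 1)
    (hπ_stat : ∀ y, ∑ x, π x * P x y = π y)
    (δ : ℝ) (hδ : δ ∈ Set.Ioo (0 : ℝ) 1)
    -- coupling of `P(x,·)` and `P(y,·)` with mean contraction for every neighboring pair
    (hcoupling : ∀ x y : Ω, N x y → ∃ Q : Ω → Ω → ℝ,
        (∀ a b, 0 ≤ Q a b) ∧
        (∀ a, ∑ b, Q a b = P x a) ∧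
        (∀ b, ∑ a, Q a b = P y b) ∧
        ∑ a, ∑ b, Q a b * d a b ≤ (1 - δ) * d x y) :
    (∀ t : ℕ, ∀ x : Ω,
        (1 / 2) * ∑ y, |(P ^ t) x y - π y| ≤ (1 - δ) ^ t * (⨆ x, ⨆ y, d x y)) ∧
    (∀ ε : ℝ, ε ∈ Set.Ioo (0 : ℝ) 1 →
        sInf {t : ℕ | ∀ x : Ω, (1 / 2) * ∑ y, |(P ^ t) x y - π y| ≤ ε}
          ≤ ⌈(Real.log (⨆ x, ⨆ y, d x y) - Real.log ε) / δ⌉₊) := by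
  obtain ⟨hδ0, hδ1⟩ := hδ
  have hd_nonneg (x y : Ω) : 0 ≤ d x y := by
    rcases eq_or_ne x y with rfl | h
    exacts [(hd_self x).ge, zero_le_one.trans (hd_one x y h)]
  have hd_le_diam (x y : Ω) : d x y ≤ ⨆ x, ⨆ y, d x y :=
    le_ciSup_of_le (Finite.bddAbove_range _) x (le_ciSup (Finite.bddAbove_range _) y)
  have hdiam : 0 ≤ ⨆ x, ⨆ y, d x y := Real.iSup_nonneg fun x => Real.iSup_nonneg (hd_nonneg x)
  have hstep (x y : Ω) :
      ∃ Q, IsCoupling (P x) (P y) Q ∧ transportCost d Q ≤ (1 - δ) * d x y := by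
    obtain ⟨r, p, rfl, rfl, hp, hlen⟩ := hpath x y
    rw [hlen]
    refine exists_isCoupling_of_chain hd_self hd_tri hP_nonneg (fun x y hxy => ?_) p r hp
    obtain ⟨Q, hQ0, hQx, hQy, hQd⟩ := hcoupling x y hxy
    exact ⟨Q, ⟨hQ0, hQx, hQy⟩, hQd⟩
  have hcontract : 0 ≤ 1 - δ := by linarith
  have htv (t : ℕ) (x : Ω) :
      1 / 2 * ∑ y, |(P ^ t) x y - π y| ≤ (1 - δ) ^ t * ⨆ x, ⨆ y, d x y := by
    refine half_sum_abs_pow_sub_le hd_nonneg hd_one hπ_nonneg hπ_sum (funext hπ_stat)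
      (fun x y => ?_) x
    obtain ⟨C, hC, hCd⟩ := exists_isCoupling_pow hcontract hstep t x y
    exact ⟨C, hC, hCd.trans (by gcongr; exact hd_le_diam x y)⟩
  exact ⟨htv, fun ε hε => Nat.sInf_le fun x =>
    (htv _ x).trans (one_sub_pow_ceil_mul_le hδ0 hδ1.le hdiam hε.1)⟩

/-- **Path coupling (Bubley–Dyer).**  Let `Ω` be a finite set with a symmetric,
connected neighbor relation `N` and a compatible path metric `d` (so `d x y ≥ 1`
for `x ≠ y`, and `d x y` is the minimum over neighbor-to-neighbor paths of the sum
of the step distances).  If `P` is a stochastic matrix with stationary distribution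
`π`, and for every neighboring pair there is a coupling of the one-step
distributions whose mean distance contracts by a factor `1 - δ`, then
`max_x ‖P^t(x,·) − π‖_TV ≤ (1-δ)^t · diam Ω`, and consequently
`t_mix(ε) ≤ ⌈(log diam Ω − log ε)/δ⌉`. -/
theorem path_coupling_theorem
    {Ω : Type*} [Fintype Ω] [DecidableEq Ω] [Nonempty Ω]
    (N : Ω → Ω → Prop) (hsym : Symmetric N)
    (d : Ω → Ω → ℝ)
    (hd_self : ∀ x, d x x = 0)
    (hd_symm : ∀ x y, d x y = d y x)
    (hd_tri : ∀ x y z, d x z ≤ d x y + d y z)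
    (hd_one : ∀ x y : Ω, x ≠ y → 1 ≤ d x y)
    -- `d` is a path metric: some neighbor-to-neighbor path realizes `d x y` ...
    (hpath : ∀ x y : Ω, ∃ (r : ℕ) (p : ℕ → Ω), p 0 = x ∧ p r = y ∧
        (∀ i < r, N (p i) (p (i + 1))) ∧
        d x y = ∑ i ∈ Finset.range r, d (p i) (p (i + 1)))
    -- ... and every neighbor-to-neighbor path dominates `d x y`
    (hmin : ∀ x y : Ω, ∀ (r : ℕ) (p : ℕ → Ω), p 0 = x → p r = y →
        (∀ i < r, N (p i) (p (i + 1))) →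
        d x y ≤ ∑ i ∈ Finset.range r, d (p i) (p (i + 1)))
    (P : Matrix Ω Ω ℝ)
    (hP_nonneg : ∀ x y, 0 ≤ P x y) (hP_row : ∀ x, ∑ y, P x y = 1)
    (π : Ω → ℝ) (hπ_nonneg : ∀ x, 0 ≤ π x) (hπ_sum : ∑ x, π x = 1)
    (hπ_stat : ∀ y, ∑ x, π x * P x y = π y)
    (δ : ℝ) (hδ : δ ∈ Set.Ioo (0 : ℝ) 1)
    -- coupling of `P(x,·)` and `P(y,·)` with mean contraction for every neighboring pair
    (hcoupling : ∀ x y : Ω, N x y → ∃ Q : Ω → Ω → ℝ,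
        (∀ a b, 0 ≤ Q a b) ∧
        (∀ a, ∑ b, Q a b = P x a) ∧
        (∀ b, ∑ a, Q a b = P y b) ∧
        ∑ a, ∑ b, Q a b * d a b ≤ (1 - δ) * d x y) :
    (∀ t : ℕ, ∀ x : Ω,
        (1 / 2) * ∑ y, |(P ^ t) x y - π y| ≤ (1 - δ) ^ t * (⨆ x, ⨆ y, d x y)) ∧
    (∀ ε : ℝ, ε ∈ Set.Ioo (0 : ℝ) 1 →
        sInf {t : ℕ | ∀ x : Ω, (1 / 2) * ∑ y, |(P ^ t) x y - π y| ≤ ε}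
          ≤ ⌈(Real.log (⨆ x, ⨆ y, d x y) - Real.log ε) / δ⌉₊) :=
  path_coupling_theorem_general N d hd_self hd_tri hd_one hpath P hP_nonneg π hπ_nonneg hπ_sum
    hπ_stat δ hδ hcoupling
end

section
/- Let 0 < β ≤ β_c = log 4 and K_c^{(2)}(β) = (e^β + 2)/(4β). Then: (a) for 0 < K ≤ K_c^{(2)}(β), the set of global minimum points of G_{β,K} on ℝ is {0}; (b) for K > K_c^{(2)}(β), there exists z(β,K) > 0 such that the set of global minimum points of G_{β,K} on ℝ is {z(β,K), −z(β,K)}; (c) the function K ↦ z(β,K) is positive, increasing, and continuous on (K_c^{(2)}(β), ∞), and z(β,K) → 0 as K → K_c^{(2)}(β)⁺ (continuous bifurcation). -/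
open Filter

noncomputable section

/-- Cumulant generating function
`c_β(t) = log[(1 + e^{−β}(e^t + e^{−t}))/(1 + 2e^{−β})]`. -/
def cBC (β t : ℝ) : ℝ :=
  Real.log ((1 + Real.exp (-β) * (Real.exp t + Real.exp (-t))) / (1 + 2 * Real.exp (-β)))

/-- Free energy functional `G_{β,K}(z) = βKz² − c_β(2βKz)`. -/
def GBC (β K z : ℝ) : ℝ := β * K * z ^ 2 - cBC β (2 * β * K * z)

/-- Second-order critical curve `K_c^{(2)}(β) = (e^β + 2)/(4β)`. -/
def Kc2 (β : ℝ) : ℝ := (Real.exp β + 2) / (4 * β)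

/-!
With `φ = c_β'`, the derivative is `G'(z) = 2βK (z - φ(2βKz))`. For `e^β ≤ 4` the function `φ` is
strictly concave on `[0, ∞)`, so its slope `φ(t)/t` decreases strictly on `(0, ∞)` from
`φ'(0) = 2/(e^β + 2)` towards `0`. Hence on `(0, ∞)` the derivative `G'` keeps a positive sign when
`(2βK)⁻¹ ≥ 2/(e^β + 2)`, i.e. `K ≤ K_c^{(2)}(β)`, and otherwise changes sign exactly once, at
`z = φ(t)` where `t` is the unique root of `φ(t)/t = (2βK)⁻¹`; as `G` is even this locates its
minimizers. The root `t(K)` is the inverse of the increasing continuous bijection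
`t ↦ (2β φ(t)/t)⁻¹` from `(0, ∞)` onto `(K_c^{(2)}(β), ∞)`, which gives monotonicity, continuity and
`t(K) → 0` as `K → K_c^{(2)}(β)⁺`.
-/

open Set Topology Real

theorem StrictConcaveOn.strictAntiOn_div {f : ℝ → ℝ} (hf : StrictConcaveOn ℝ (Ici 0) f)
    (h0 : f 0 = 0) : StrictAntiOn (fun t => f t / t) (Ioi 0) := by
  intro x hx y hy hxy
  simpa [h0] using hf.secant_strict_mono self_mem_Ici (mem_Ici.2 (le_of_lt hx))
    (mem_Ici.2 (le_of_lt hy)) hx.ne' hy.ne' hxy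

theorem HasDerivAt.tendsto_div_nhdsGT_zero {f : ℝ → ℝ} {f' : ℝ} (hf : HasDerivAt f f' 0)
    (h0 : f 0 = 0) : Tendsto (fun t => f t / t) (𝓝[>] 0) (𝓝 f') := by
  simpa [h0, div_eq_inv_mul] using hf.tendsto_slope_zero_right

theorem StrictAntiOn.lt_of_tendsto_nhdsGT {g : ℝ → ℝ} {a L t : ℝ} (hg : StrictAntiOn g (Ioi a))
    (hL : Tendsto g (𝓝[>] a) (𝓝 L)) (ht : a < t) : g t < L := by
  obtain ⟨m, ham, hmt⟩ := exists_between ht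
  have hm_le : g m ≤ L := ge_of_tendsto hL <| by
    filter_upwards [Ioo_mem_nhdsGT ham] with s hs
    exact (hg hs.1 ham hs.2).le
  exact (hg ham (ham.trans hmt) hmt).trans_le hm_le

theorem setOf_forall_le_eq_pair_of_even {f : ℝ → ℝ} {a : ℝ} (hf : Differentiable ℝ f)
    (heven : ∀ x, f (-x) = f x) (ha : 0 ≤ a) (hneg : ∀ x ∈ Ioo 0 a, deriv f x < 0)
    (hpos : ∀ x ∈ Ioi a, 0 < deriv f x) : {z | ∀ w, f z ≤ f w} = {a, -a} := by
  have hanti : StrictAntiOn f (Icc 0 a) :=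
    strictAntiOn_of_deriv_neg (convex_Icc 0 a) hf.continuous.continuousOn
      (by rwa [interior_Icc])
  have hmono : StrictMonoOn f (Ici a) :=
    strictMonoOn_of_deriv_pos (convex_Ici a) hf.continuous.continuousOn
      (by rwa [interior_Ici])
  have habs (x : ℝ) : f |x| = f x := by
    rcases abs_choice x with h | h <;> rw [h]
    exact heven x
  have hlt (x : ℝ) (hx : |x| ≠ a) : f a < f x := by
    rw [← habs x]
    rcases hx.lt_or_gt with h | h
    · exact hanti ⟨abs_nonneg x, h.le⟩ ⟨ha, le_rfl⟩ h
    · exact hmono self_mem_Ici (mem_Ici.2 h.le) h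
  ext z
  simp only [mem_ofPred_eq, mem_insert_iff, mem_singleton_iff, ← abs_eq ha]
  constructor
  · intro hz
    by_contra h
    exact (hlt z h).not_ge (hz a)
  · intro hz w
    rw [← habs z, hz]
    rcases eq_or_ne |w| a with h | h
    · rw [← habs w, h]
    · exact (hlt w h).le

namespace BlumeCapel

def phi (β t : ℝ) : ℝ := 2 * sinh t / (exp β + 2 * cosh t)

lemma exp_add_two_mul_cosh_pos (β t : ℝ) : 0 < exp β + 2 * cosh t := by
  have := cosh_pos t
  positivity

lemma cBC_eq_log_sub_log (β t : ℝ) :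
    cBC β t = log (exp β + 2 * cosh t) - log (exp β + 2) := by
  have hfrac : (1 + exp (-β) * (exp t + exp (-t))) / (1 + 2 * exp (-β))
      = (exp β + 2 * cosh t) / (exp β + 2) := by
    rw [exp_neg, cosh_eq]
    field_simp
  rw [cBC, hfrac, log_div (exp_add_two_mul_cosh_pos β t).ne' (by positivity)]

lemma hasDerivAt_cBC (β t : ℝ) : HasDerivAt (cBC β) (phi β t) t := by
  rw [show cBC β = fun s => log (exp β + 2 * cosh s) - log (exp β + 2) from
    funext (cBC_eq_log_sub_log β)]
  exact ((((hasDerivAt_cosh t).const_mul 2).const_add _).log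
    (exp_add_two_mul_cosh_pos β t).ne').sub_const _

lemma hasDerivAt_phi (β t : ℝ) :
    HasDerivAt (phi β) ((2 * exp β * cosh t + 4) / (exp β + 2 * cosh t) ^ 2) t := by
  refine (((hasDerivAt_sinh t).const_mul 2).div (((hasDerivAt_cosh t).const_mul 2).const_add _)
    (exp_add_two_mul_cosh_pos β t).ne').congr_deriv ?_
  congr 1
  linear_combination 4 * cosh_sq_sub_sinh_sq t

lemma deriv2_phi (β t : ℝ) : deriv^[2] (phi β) t =
    2 * sinh t * (exp β ^ 2 - 2 * exp β * cosh t - 8) / (exp β + 2 * cosh t) ^ 3 := by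
  have hD := (exp_add_two_mul_cosh_pos β t).ne'
  rw [Function.iterate_succ_apply, Function.iterate_one,
    show deriv (phi β) = _ from funext fun s => (hasDerivAt_phi β s).deriv]
  have hden : HasDerivAt (fun s => (exp β + 2 * cosh s) ^ 2)
      (2 * (exp β + 2 * cosh t) * (2 * sinh t)) t := by
    refine ((((hasDerivAt_cosh t).const_mul 2).const_add (exp β)).fun_pow 2).congr_deriv ?_
    norm_num
  refine ((((hasDerivAt_cosh t).const_mul (2 * exp β)).add_const 4).div hden
    (pow_ne_zero 2 hD)).deriv.trans ?_
  field_simp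
  ring

lemma phi_zero (β : ℝ) : phi β 0 = 0 := by simp [phi]

lemma phi_pos (β : ℝ) {t : ℝ} (ht : 0 < t) : 0 < phi β t :=
  div_pos (by have := sinh_pos_iff.2 ht; positivity) (exp_add_two_mul_cosh_pos β t)

lemma phi_lt_one (β t : ℝ) : phi β t < 1 := by
  rw [phi, div_lt_one (exp_add_two_mul_cosh_pos β t)]
  linarith [sinh_lt_cosh t, exp_pos β]

lemma continuous_phi (β : ℝ) : Continuous (phi β) :=
  continuous_iff_continuousAt.2 fun t => (hasDerivAt_phi β t).continuousAt

lemma strictMono_phi (β : ℝ) : StrictMono (phi β) :=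
  strictMono_of_hasDerivAt_pos (hasDerivAt_phi β) fun t => by
    have := exp_add_two_mul_cosh_pos β t
    positivity

lemma strictConcaveOn_phi {β : ℝ} (hβ : exp β ≤ 4) : StrictConcaveOn ℝ (Ici 0) (phi β) := by
  refine strictConcaveOn_of_deriv2_neg (convex_Ici 0) (continuous_phi β).continuousOn
    fun t ht => ?_
  rw [interior_Ici] at ht
  have hsinh : 0 < sinh t := sinh_pos_iff.2 ht
  -- `e^{2β} - 2 e^β cosh t - 8 < (e^β - 4)(e^β + 2) ≤ 0`: this is where `β ≤ log 4` is used
  have hfactor : exp β ^ 2 - 2 * exp β * cosh t - 8 < 0 := by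
    nlinarith [one_lt_cosh.2 ht.ne', exp_pos β]
  rw [deriv2_phi]
  exact div_neg_of_neg_of_pos (mul_neg_of_pos_of_neg (by positivity) hfactor)
    (pow_pos (exp_add_two_mul_cosh_pos β t) 3)

lemma strictAntiOn_phi_div {β : ℝ} (hβ : exp β ≤ 4) :
    StrictAntiOn (fun t => phi β t / t) (Ioi 0) :=
  (strictConcaveOn_phi hβ).strictAntiOn_div (phi_zero β)

lemma Kc2_eq (β : ℝ) : Kc2 β = (2 * β * (2 / (exp β + 2)))⁻¹ := by
  rw [Kc2]
  field_simp
  ring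

lemma tendsto_phi_div_nhdsGT (β : ℝ) :
    Tendsto (fun t => phi β t / t) (𝓝[>] 0) (𝓝 (2 / (exp β + 2))) := by
  have h := (hasDerivAt_phi β 0).tendsto_div_nhdsGT_zero (phi_zero β)
  rwa [cosh_zero, show (2 * exp β * 1 + 4) / (exp β + 2 * 1) ^ 2 = 2 / (exp β + 2) by
    field_simp; ring] at h

lemma phi_div_lt {β t : ℝ} (hβ : exp β ≤ 4) (ht : 0 < t) : phi β t / t < 2 / (exp β + 2) :=
  (strictAntiOn_phi_div hβ).lt_of_tendsto_nhdsGT (tendsto_phi_div_nhdsGT β) ht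

lemma hasDerivAt_GBC (β K z : ℝ) :
    HasDerivAt (GBC β K) (2 * β * K * (z - phi β (2 * β * K * z))) z := by
  have hlin : HasDerivAt (fun w => 2 * β * K * w) (2 * β * K) z := by
    simpa using (hasDerivAt_id z).const_mul (2 * β * K)
  refine (((hasDerivAt_pow 2 z).const_mul (β * K)).sub
    ((hasDerivAt_cBC β _).comp z hlin)).congr_deriv ?_
  ring

lemma GBC_neg (β K z : ℝ) : GBC β K (-z) = GBC β K z := by
  have hc : cBC β (-(2 * β * K * z)) = cBC β (2 * β * K * z) := by
    rw [cBC, cBC, neg_neg, add_comm (exp (-_))]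
  rw [GBC, GBC, mul_neg, neg_sq, hc]

lemma deriv_GBC_eq {β K z : ℝ} (hz : z ≠ 0) :
    deriv (GBC β K) z = 2 * β * K * (2 * β * K * z) *
      ((2 * β * K)⁻¹ - phi β (2 * β * K * z) / (2 * β * K * z)) := by
  rw [(hasDerivAt_GBC β K z).deriv]
  field_simp

lemma deriv_GBC_neg {β K z : ℝ} (hβK : 0 < 2 * β * K) (hz : 0 < z)
    (h : (2 * β * K)⁻¹ < phi β (2 * β * K * z) / (2 * β * K * z)) :
    deriv (GBC β K) z < 0 := by
  rw [deriv_GBC_eq hz.ne']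
  exact mul_neg_of_pos_of_neg (by positivity) (sub_neg.2 h)

lemma deriv_GBC_pos {β K z : ℝ} (hβK : 0 < 2 * β * K) (hz : 0 < z)
    (h : phi β (2 * β * K * z) / (2 * β * K * z) < (2 * β * K)⁻¹) :
    0 < deriv (GBC β K) z := by
  rw [deriv_GBC_eq hz.ne']
  exact mul_pos (by positivity) (sub_pos.2 h)

lemma differentiable_GBC (β K : ℝ) : Differentiable ℝ (GBC β K) :=
  fun z => (hasDerivAt_GBC β K z).differentiableAt

theorem setOf_forall_GBC_le_of_le_Kc2 {β K : ℝ} (hβ : 0 < β) (hβ4 : exp β ≤ 4) (hK : 0 < K)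
    (hKc : K ≤ Kc2 β) : {z | ∀ w, GBC β K z ≤ GBC β K w} = {0} := by
  have hβK : 0 < 2 * β * K := by positivity
  have hslope : 2 / (exp β + 2) ≤ (2 * β * K)⁻¹ := by
    rw [Kc2_eq] at hKc
    calc 2 / (exp β + 2) = (2 * β * (2 * β * (2 / (exp β + 2)))⁻¹)⁻¹ := by field_simp
      _ ≤ (2 * β * K)⁻¹ := by gcongr
  simpa using setOf_forall_le_eq_pair_of_even (differentiable_GBC β K) (GBC_neg β K) le_rfl
    (by simp) fun z hz => deriv_GBC_pos hβK hz <|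
      (phi_div_lt hβ4 (mul_pos hβK hz)).trans_le hslope

/-- The coupling `K` for which `t > 0` solves the mean-field equation `φ(t)/t = (2βK)⁻¹`. -/
def rootCoupling (β t : ℝ) : ℝ := (2 * β * (phi β t / t))⁻¹

theorem setOf_forall_GBC_le_of_rootCoupling_eq {β K t : ℝ} (hβ : 0 < β) (hβ4 : exp β ≤ 4)
    (ht : 0 < t) (hK : rootCoupling β t = K) :
    {z | ∀ w, GBC β K z ≤ GBC β K w} = {phi β t, -phi β t} := by
  have hphi := phi_pos β ht
  have hK0 : 0 < K := by
    rw [← hK, rootCoupling]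
    have := div_pos hphi ht
    positivity
  have hβK : 0 < 2 * β * K := by positivity
  have hroot : phi β t / t = (2 * β * K)⁻¹ := by
    rw [← hK, rootCoupling]
    field_simp
  have hscale : 2 * β * K * phi β t = t := by
    field_simp at hroot
    linarith
  refine setOf_forall_le_eq_pair_of_even (differentiable_GBC β K) (GBC_neg β K) hphi.le
    (fun z hz => deriv_GBC_neg hβK hz.1 ?_) (fun z hz => deriv_GBC_pos hβK (hphi.trans hz) ?_)
  · rw [← hroot]
    exact strictAntiOn_phi_div hβ4 (show 0 < 2 * β * K * z by have := hz.1; positivity) ht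
      (hscale ▸ by gcongr; exact hz.2)
  · rw [← hroot]
    exact strictAntiOn_phi_div hβ4 ht (show 0 < 2 * β * K * z by
      have := hphi.trans hz; positivity) (hscale ▸ by gcongr; exact hz)

lemma Kc2_lt_rootCoupling {β t : ℝ} (hβ : 0 < β) (hβ4 : exp β ≤ 4) (ht : 0 < t) :
    Kc2 β < rootCoupling β t := by
  have := div_pos (phi_pos β ht) ht
  rw [Kc2_eq, rootCoupling]
  exact inv_strictAnti₀ (by positivity)
    (mul_lt_mul_of_pos_left (phi_div_lt hβ4 ht) (by positivity))

lemma strictMonoOn_rootCoupling {β : ℝ} (hβ : 0 < β) (hβ4 : exp β ≤ 4) :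
    StrictMonoOn (rootCoupling β) (Ioi 0) := fun x hx y hy hxy => by
  have := div_pos (phi_pos β hy) hy
  have := strictAntiOn_phi_div hβ4 hx hy hxy
  unfold rootCoupling
  gcongr

lemma continuousOn_rootCoupling {β : ℝ} (hβ : 0 < β) : ContinuousOn (rootCoupling β) (Ioi 0) :=
  (continuousOn_const.mul ((continuous_phi β).continuousOn.div continuousOn_id
    fun _ ht => ne_of_gt ht)).inv₀
    fun t ht => (mul_pos (by positivity) (div_pos (phi_pos β ht) ht)).ne'

lemma tendsto_rootCoupling_nhdsGT {β : ℝ} (hβ : 0 < β) :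
    Tendsto (rootCoupling β) (𝓝[>] 0) (𝓝 (Kc2 β)) := by
  rw [Kc2_eq]
  exact ((tendsto_phi_div_nhdsGT β).const_mul (2 * β)).inv₀ (by positivity)

lemma lt_rootCoupling_two_mul {β K : ℝ} (hβ : 0 < β) (hK : 0 < K) :
    K < rootCoupling β (2 * β * K) := by
  have hphi := phi_pos β (show 0 < 2 * β * K by positivity)
  rw [rootCoupling, show 2 * β * (phi β (2 * β * K) / (2 * β * K)) = phi β (2 * β * K) / K by
    field_simp, inv_div, lt_div_iff₀ hphi]
  nlinarith [phi_lt_one β (2 * β * K)]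

lemma surjOn_rootCoupling {β : ℝ} (hβ : 0 < β) :
    SurjOn (rootCoupling β) (Ioi 0) (Ioi (Kc2 β)) := by
  intro K hK
  have hK0 : 0 < K := lt_trans (by rw [Kc2]; positivity) hK
  obtain ⟨s, hsK, hs⟩ :=
    (((tendsto_rootCoupling_nhdsGT hβ).eventually_lt_const hK).and self_mem_nhdsWithin).exists
  have hsub : uIcc s (2 * β * K) ⊆ Ioi 0 :=
    ordConnected_Ioi.uIcc_subset hs (show 0 < 2 * β * K by positivity)
  obtain ⟨t, ht, htK⟩ := intermediate_value_uIcc ((continuousOn_rootCoupling hβ).mono hsub)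
    (mem_uIcc_of_le hsK.le (lt_rootCoupling_two_mul hβ hK0).le)
  exact ⟨t, hsub ht, htK⟩

/-- The positive root `t` of the mean-field equation `φ(t)/t = (2βK)⁻¹`; meaningful only for
`K > K_c^{(2)}(β)`. -/
def meanFieldRoot (β K : ℝ) : ℝ := Function.invFunOn (rootCoupling β) (Ioi 0) K

lemma meanFieldRoot_pos {β K : ℝ} (hβ : 0 < β) (hK : Kc2 β < K) : 0 < meanFieldRoot β K :=
  (surjOn_rootCoupling hβ).mapsTo_invFunOn hK

lemma rootCoupling_meanFieldRoot {β K : ℝ} (hβ : 0 < β) (hK : Kc2 β < K) :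
    rootCoupling β (meanFieldRoot β K) = K :=
  (surjOn_rootCoupling hβ).rightInvOn_invFunOn hK

lemma meanFieldRoot_rootCoupling {β t : ℝ} (hβ : 0 < β) (hβ4 : exp β ≤ 4) (ht : 0 < t) :
    meanFieldRoot β (rootCoupling β t) = t :=
  (strictMonoOn_rootCoupling hβ hβ4).injOn.leftInvOn_invFunOn ht

lemma strictMonoOn_meanFieldRoot {β : ℝ} (hβ : 0 < β) (hβ4 : exp β ≤ 4) :
    StrictMonoOn (meanFieldRoot β) (Ioi (Kc2 β)) := fun K₁ h₁ K₂ h₂ h₁₂ => by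
  rwa [← (strictMonoOn_rootCoupling hβ hβ4).lt_iff_lt (meanFieldRoot_pos hβ h₁)
    (meanFieldRoot_pos hβ h₂), rootCoupling_meanFieldRoot hβ h₁,
    rootCoupling_meanFieldRoot hβ h₂]

lemma image_meanFieldRoot {β : ℝ} (hβ : 0 < β) (hβ4 : exp β ≤ 4) :
    meanFieldRoot β '' Ioi (Kc2 β) = Ioi 0 := by
  rw [← (surjOn_rootCoupling hβ).image_eq_of_mapsTo fun t ht => Kc2_lt_rootCoupling hβ hβ4 ht]
  exact (strictMonoOn_rootCoupling hβ hβ4).injOn.invFunOn_image subset_rfl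

lemma continuousOn_meanFieldRoot {β : ℝ} (hβ : 0 < β) (hβ4 : exp β ≤ 4) :
    ContinuousOn (meanFieldRoot β) (Ioi (Kc2 β)) := fun K hK =>
  ((strictMonoOn_meanFieldRoot hβ hβ4).continuousAt_of_image_mem_nhds (isOpen_Ioi.mem_nhds hK)
    (by rw [image_meanFieldRoot hβ hβ4]
        exact isOpen_Ioi.mem_nhds (meanFieldRoot_pos hβ hK))).continuousWithinAt

lemma tendsto_meanFieldRoot_nhdsGT {β : ℝ} (hβ : 0 < β) (hβ4 : exp β ≤ 4) :
    Tendsto (meanFieldRoot β) (𝓝[>] Kc2 β) (𝓝 0) := by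
  refine tendsto_order.2 ⟨fun b hb => ?_, fun b hb => ?_⟩
  · filter_upwards [self_mem_nhdsWithin] with K hK using hb.trans (meanFieldRoot_pos hβ hK)
  · have hKb := Kc2_lt_rootCoupling hβ hβ4 hb
    filter_upwards [Ioo_mem_nhdsGT hKb] with K hK
    simpa only [meanFieldRoot_rootCoupling hβ hβ4 hb] using
      strictMonoOn_meanFieldRoot hβ hβ4 hK.1 hKb hK.2

end BlumeCapel

open BlumeCapel

/-- **Second-order phase transition for the mean-field Blume–Capel model**
(Theorem 3.6 of Ellis–Otto–Touchette).  For `0 < β ≤ β_c = log 4`: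
(a) for `0 < K ≤ K_c^{(2)}(β)` the set of global minimum points of `G_{β,K}` is `{0}`;
(b) for `K > K_c^{(2)}(β)` it equals `{z(β,K), −z(β,K)}` with `z(β,K) > 0`;
(c) `K ↦ z(β,K)` is positive, increasing and continuous on `(K_c^{(2)}(β), ∞)` and
tends to `0` as `K → K_c^{(2)}(β)⁺` (continuous bifurcation). -/
theorem blume_capel_second_order (β : ℝ) (hβ0 : 0 < β) (hβc : β ≤ Real.log 4) :
    (∀ K : ℝ, 0 < K → K ≤ Kc2 β →
      {z : ℝ | ∀ w : ℝ, GBC β K z ≤ GBC β K w} = {0}) ∧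
    ∃ zmin : ℝ → ℝ,
      (∀ K : ℝ, Kc2 β < K →
        0 < zmin K ∧
        {z : ℝ | ∀ w : ℝ, GBC β K z ≤ GBC β K w} = {zmin K, -(zmin K)}) ∧
      StrictMonoOn zmin (Set.Ioi (Kc2 β)) ∧
      ContinuousOn zmin (Set.Ioi (Kc2 β)) ∧
      Tendsto zmin (nhdsWithin (Kc2 β) (Set.Ioi (Kc2 β))) (nhds 0) := by
  have hβ4 : exp β ≤ 4 := (exp_le_exp.2 hβc).trans_eq (exp_log (by norm_num))
  refine ⟨fun K hK hKc => setOf_forall_GBC_le_of_le_Kc2 hβ0 hβ4 hK hKc,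
    fun K => phi β (meanFieldRoot β K), fun K hK => ⟨phi_pos β (meanFieldRoot_pos hβ0 hK),
      setOf_forall_GBC_le_of_rootCoupling_eq hβ0 hβ4 (meanFieldRoot_pos hβ0 hK)
        (rootCoupling_meanFieldRoot hβ0 hK)⟩,
    (strictMono_phi β).comp_strictMonoOn (strictMonoOn_meanFieldRoot hβ0 hβ4),
    (continuous_phi β).comp_continuousOn (continuousOn_meanFieldRoot hβ0 hβ4), ?_⟩
  simpa only [Function.comp_def, phi_zero] using
    ((continuous_phi β).tendsto 0).comp (tendsto_meanFieldRoot_nhdsGT hβ0 hβ4)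

end
end

section
/- For every β > β_c = log 4 there exist a critical value K_c^{(1)}(β) > 0 and a function K ↦ z(β,K) defined for K ≥ K_c^{(1)}(β) such that: (a) for 0 < K < K_c^{(1)}(β), the set of global minimum points of G_{β,K} on ℝ is {0}; (b) z(β,K_c^{(1)}(β)) > 0 and the set of global minimum points of G_{β,K_c^{(1)}(β)} is {0, z(β,K_c^{(1)}(β)), −z(β,K_c^{(1)}(β))}; (c) for K > K_c^{(1)}(β), the set of global minimum points of G_{β,K} is {z(β,K), −z(β,K)} with z(β,K) > 0; (d) z(β,K) is positive, increasing, and continuous for K ≥ K_c^{(1)}(β), and z(β,K) → z(β,K_c^{(1)}(β)) > 0 as K → K_c^{(1)}(β)⁺ (discontinuous bifurcation). -/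
open Filter

noncomputable section

namespace BCaux

open Real Set

def dd (ε t : ℝ) : ℝ := 1 + 2*ε*Real.cosh t
def cc (ε t : ℝ) : ℝ := Real.log (dd ε t) - Real.log (1 + 2*ε)
def cp (ε t : ℝ) : ℝ := 2*ε*Real.sinh t / dd ε t
def cpp (ε t : ℝ) : ℝ := 2*ε*(Real.cosh t + 2*ε) / (dd ε t)^2
def NN (t : ℝ) : ℝ := t * Real.cosh t - Real.sinh t
def DD (t : ℝ) : ℝ := Real.sinh (2*t) - 2*t
def psi (ε t : ℝ) : ℝ := NN t - ε * DD t
def VV (ε t : ℝ) : ℝ := t * cp ε t / 2 - cc ε t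
def hh (ε t : ℝ) : ℝ := cc ε t / t^2
def ph (ε t : ℝ) : ℝ := cp ε t / t
def FF (ε a t : ℝ) : ℝ := a * t^2 - cc ε t

variable {ε : ℝ}

lemma dd_pos (hε0 : 0 < ε) (t : ℝ) : 0 < dd ε t := by
  have := Real.cosh_pos t
  unfold dd; nlinarith

lemma hasDerivAt_dd (t : ℝ) : HasDerivAt (dd ε) (2*ε*Real.sinh t) t := by
  exact ((Real.hasDerivAt_cosh t).const_mul (2*ε)).const_add 1

lemma hasDerivAt_cc (hε0 : 0 < ε) (t : ℝ) : HasDerivAt (cc ε) (cp ε t) t := by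
  have h := ((hasDerivAt_dd (ε := ε) t).log (dd_pos hε0 t).ne').sub_const (Real.log (1 + 2*ε))
  exact h

lemma hasDerivAt_cp (hε0 : 0 < ε) (t : ℝ) : HasDerivAt (cp ε) (cpp ε t) t := by
  have h := (((Real.hasDerivAt_sinh t).const_mul (2*ε)).div (hasDerivAt_dd t) (dd_pos hε0 t).ne')
  refine h.congr_deriv ?_
  have hc := Real.cosh_sq_sub_sinh_sq t
  have hd := (dd_pos hε0 t).ne'
  unfold cpp dd
  field_simp
  linear_combination (2*ε) * hc

lemma cc_zero : cc ε 0 = 0 := by simp [cc, dd]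

lemma cp_zero : cp ε 0 = 0 := by simp [cp]

lemma cc_even (t : ℝ) : cc ε (-t) = cc ε t := by simp [cc, dd]

lemma cp_pos (hε0 : 0 < ε) {t : ℝ} (ht : 0 < t) : 0 < cp ε t := by
  have := Real.sinh_pos_iff.mpr ht
  exact div_pos (by nlinarith) (dd_pos hε0 t)

lemma cp_lt_one (hε0 : 0 < ε) (t : ℝ) : cp ε t < 1 := by
  rw [cp, div_lt_one (dd_pos hε0 t)]
  have := Real.sinh_lt_cosh t  -- check name
  unfold dd; nlinarith

lemma cc_pos (hε0 : 0 < ε) {t : ℝ} (ht : t ≠ 0) : 0 < cc ε t := by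
  have h1 : 1 < Real.cosh t := by
    rcases Real.one_lt_cosh.mpr ht with h; exact h  -- check name
  have : (1 : ℝ) + 2*ε < dd ε t := by unfold dd; nlinarith
  have h2 : (0:ℝ) < 1 + 2*ε := by nlinarith
  exact sub_pos.mpr (Real.log_lt_log h2 this)

lemma cpp_pos (hε0 : 0 < ε) (t : ℝ) : 0 < cpp ε t := by
  have := Real.cosh_pos t
  exact div_pos (by nlinarith) (pow_pos (dd_pos hε0 t) 2)

/-- generic: positive derivative on positives + zero at zero gives positivity -/
lemma pos_of_deriv_pos {g g' : ℝ → ℝ} (hd : ∀ x, HasDerivAt g (g' x) x)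
    (h0 : g 0 = 0) (hp : ∀ x, 0 < x → 0 < g' x) {t : ℝ} (ht : 0 < t) : 0 < g t := by
  have hm : StrictMonoOn g (Ici (0:ℝ)) := by
    refine strictMonoOn_of_deriv_pos (convex_Ici 0)
      (fun x _ => (hd x).continuousAt.continuousWithinAt) (fun x hx => ?_)
    rw [interior_Ici] at hx
    rw [(hd x).deriv]
    exact hp x hx
  have := hm (self_mem_Ici) (mem_Ici.mpr ht.le) ht
  rwa [h0] at this

lemma nonneg_of_deriv_nonneg {g g' : ℝ → ℝ} (hd : ∀ x, HasDerivAt g (g' x) x)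
    (h0 : g 0 = 0) (hp : ∀ x, 0 ≤ x → 0 ≤ g' x) {t : ℝ} (ht : 0 ≤ t) : 0 ≤ g t := by
  have hm : MonotoneOn g (Ici (0:ℝ)) := by
    refine monotoneOn_of_deriv_nonneg (convex_Ici 0)
      (fun x _ => (hd x).continuousAt.continuousWithinAt)
      (fun x _ => (hd x).differentiableAt.differentiableWithinAt) (fun x hx => ?_)
    rw [interior_Ici] at hx
    rw [(hd x).deriv]
    exact hp x hx.le
  have := hm (self_mem_Ici) (mem_Ici.mpr ht) ht
  rwa [h0] at this


lemma sinh_nonneg' {t : ℝ} (ht : 0 ≤ t) : 0 ≤ Real.sinh t := by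
  rcases eq_or_lt_of_le ht with h | h
  · simp [← h]
  · exact (Real.sinh_pos_iff.mpr h).le

lemma hasDerivAt_two_mul (t : ℝ) : HasDerivAt (fun x : ℝ => 2*x) 2 t := by
  simpa using (hasDerivAt_id t).const_mul 2

lemma hasDerivAt_sinh2 (t : ℝ) :
    HasDerivAt (fun x : ℝ => Real.sinh (2*x)) (2 * Real.cosh (2*t)) t := by
  have h := (Real.hasDerivAt_sinh (2*t)).comp t (hasDerivAt_two_mul t)
  simpa [Function.comp_def, mul_comm] using h

lemma hasDerivAt_cosh2 (t : ℝ) :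
    HasDerivAt (fun x : ℝ => Real.cosh (2*x)) (2 * Real.sinh (2*t)) t := by
  have h := (Real.hasDerivAt_cosh (2*t)).comp t (hasDerivAt_two_mul t)
  simpa [Function.comp_def, mul_comm] using h

lemma hasDerivAt_NN (t : ℝ) : HasDerivAt NN (t * Real.sinh t) t := by
  show HasDerivAt (fun x => x * Real.cosh x - Real.sinh x) _ t
  have h := ((hasDerivAt_id' (x := t)).mul (Real.hasDerivAt_cosh t)).sub (Real.hasDerivAt_sinh t)
  refine h.congr_deriv ?_
  ring

lemma NN_pos {t : ℝ} (ht : 0 < t) : 0 < NN t := by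
  refine pos_of_deriv_pos hasDerivAt_NN (by simp [NN]) (fun x hx => ?_) ht
  exact mul_pos hx (Real.sinh_pos_iff.mpr hx)

lemma NN_nonneg {t : ℝ} (ht : 0 ≤ t) : 0 ≤ NN t := by
  rcases eq_or_lt_of_le ht with h | h
  · simp [NN, ← h]
  · exact (NN_pos h).le

lemma cosh_lb {t : ℝ} (ht : 0 ≤ t) : 1 + t^2/2 ≤ Real.cosh t := by
  have hd : ∀ x : ℝ, HasDerivAt (fun x => Real.cosh x - (1 + x^2/2)) (Real.sinh x - x) x := by
    intro x
    have h := (Real.hasDerivAt_cosh x).sub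
      ((((hasDerivAt_id' (x := x)).pow 2).div_const 2).const_add 1)
    refine h.congr_deriv ?_
    ring
  have := nonneg_of_deriv_nonneg hd (by simp) (fun x hx => by
    rcases eq_or_lt_of_le hx with h | h
    · simp [← h]
    · exact (sub_pos.mpr ((Real.self_lt_sinh_iff).mpr h)).le) ht
  linarith

lemma sinh_lb {t : ℝ} (ht : 0 ≤ t) : t + t^3/6 ≤ Real.sinh t := by
  have hd : ∀ x : ℝ, HasDerivAt (fun x => Real.sinh x - (x + x^3/6))
      (Real.cosh x - (1 + x^2/2)) x := by
    intro x
    have h := (Real.hasDerivAt_sinh x).sub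
      ((hasDerivAt_id' (x := x)).add (((hasDerivAt_id' (x := x)).pow 3).div_const 6))
    refine h.congr_deriv ?_
    ring
  have := nonneg_of_deriv_nonneg hd (by simp) (fun x hx => by linarith [cosh_lb hx]) ht
  linarith

lemma key1 {t : ℝ} (ht : 0 ≤ t) : Real.cosh t - 1 ≤ t^2/2 * Real.cosh t := by
  have hd : ∀ x : ℝ, HasDerivAt (fun x => x^2/2 * Real.cosh x - (Real.cosh x - 1))
      (x * Real.cosh x + x^2/2 * Real.sinh x - Real.sinh x) x := by
    intro x
    have h := ((((hasDerivAt_id' (x := x)).pow 2).div_const 2).mul (Real.hasDerivAt_cosh x)).sub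
      ((Real.hasDerivAt_cosh x).sub_const 1)
    refine h.congr_deriv ?_
    simp only [Pi.pow_apply]
    ring
  have := nonneg_of_deriv_nonneg hd (by simp) (fun x hx => by
    have h1 := NN_nonneg hx
    have h2 := sinh_nonneg' hx
    have h3 : 0 ≤ x^2/2 * Real.sinh x := by positivity
    unfold NN at h1
    linarith) ht
  linarith

lemma sinh_ub {t : ℝ} (ht : 0 ≤ t) : Real.sinh t ≤ t + t^3/6 * Real.cosh t := by
  have hd : ∀ x : ℝ, HasDerivAt (fun x => x + x^3/6 * Real.cosh x - Real.sinh x)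
      (1 + x^2/2 * Real.cosh x + x^3/6 * Real.sinh x - Real.cosh x) x := by
    intro x
    have h := ((hasDerivAt_id' (x := x)).add ((((hasDerivAt_id' (x := x)).pow 3).div_const 6).mul
      (Real.hasDerivAt_cosh x))).sub (Real.hasDerivAt_sinh x)
    refine h.congr_deriv ?_
    simp only [Pi.pow_apply]
    ring
  have := nonneg_of_deriv_nonneg hd (by simp) (fun x hx => by
    have h1 := key1 hx
    have h2 := sinh_nonneg' hx
    have h3 : 0 ≤ x^3/6 * Real.sinh x := by positivity
    linarith) ht
  linarith

lemma Qf_pos {t : ℝ} (ht : 0 < t) :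
    0 < t/2 * Real.sinh (2*t) + t^2 + 1 - Real.cosh (2*t) := by
  have hf2 : ∀ y : ℝ, 0 < y → 0 < 2 + 2*y*Real.sinh (2*y) - 2*Real.cosh (2*y) := by
    intro y hy
    have h1 := NN_pos hy
    have h2 := Real.sinh_pos_iff.mpr hy
    have hs2 : Real.sinh (2*y) = 2 * Real.sinh y * Real.cosh y := Real.sinh_two_mul y
    have hc2 : Real.cosh (2*y) = Real.cosh y ^ 2 + Real.sinh y ^ 2 := Real.cosh_two_mul y
    have hc := Real.cosh_sq_sub_sinh_sq y
    unfold NN at h1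
    nlinarith [mul_pos h2 h1]
  have hf1 : ∀ x : ℝ, 0 < x → 0 < x * Real.cosh (2*x) + 2*x - 3/2 * Real.sinh (2*x) := by
    intro x hx
    refine pos_of_deriv_pos
      (g := fun x => x * Real.cosh (2*x) + 2*x - 3/2 * Real.sinh (2*x))
      (g' := fun y => 2 + 2*y*Real.sinh (2*y) - 2*Real.cosh (2*y))
      (fun y => ?_) (by simp) hf2 hx
    have h := (((hasDerivAt_id' (x := y)).mul (hasDerivAt_cosh2 y)).add
      (hasDerivAt_two_mul y)).sub ((hasDerivAt_sinh2 y).const_mul (3/2))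
    refine h.congr_deriv ?_
    ring
  refine pos_of_deriv_pos
    (g := fun x => x/2 * Real.sinh (2*x) + x^2 + 1 - Real.cosh (2*x))
    (g' := fun x => x * Real.cosh (2*x) + 2*x - 3/2 * Real.sinh (2*x))
    (fun y => ?_) (by simp) hf1 ht
  have h := (((((hasDerivAt_id' (x := y)).div_const 2).mul (hasDerivAt_sinh2 y)).add
    ((hasDerivAt_id' (x := y)).pow 2)).add_const 1).sub (hasDerivAt_cosh2 y)
  refine h.congr_deriv ?_
  ring

lemma Q_neg {t : ℝ} (ht : 0 < t) :
    2*(Real.sinh t)^2 - t^2 - t*Real.sinh t*Real.cosh t < 0 := by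
  have h := Qf_pos ht
  have hs2 : Real.sinh (2*t) = 2 * Real.sinh t * Real.cosh t := Real.sinh_two_mul t
  have hc2 : Real.cosh (2*t) = Real.cosh t ^ 2 + Real.sinh t ^ 2 := Real.cosh_two_mul t
  have hc := Real.cosh_sq_sub_sinh_sq t
  nlinarith



lemma DD_pos {t : ℝ} (ht : 0 < t) : 0 < DD t := by
  have h := Real.self_lt_sinh_iff.mpr (by linarith : (0:ℝ) < 2*t)
  unfold DD; linarith

lemma hasDerivAt_DD (t : ℝ) : HasDerivAt DD (2*Real.cosh (2*t) - 2) t := by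
  show HasDerivAt (fun x => Real.sinh (2*x) - 2*x) _ t
  exact (hasDerivAt_sinh2 t).sub (hasDerivAt_two_mul t)

lemma rho_anti : StrictAntiOn (fun t => NN t / DD t) (Ioi (0:ℝ)) := by
  refine strictAntiOn_of_deriv_neg (convex_Ioi 0) ?_ ?_
  · intro t ht
    exact (((hasDerivAt_NN t).div (hasDerivAt_DD t) (DD_pos ht).ne')).continuousAt.continuousWithinAt
  · intro t ht
    rw [interior_Ioi] at ht
    have hD := DD_pos ht
    have hder := (hasDerivAt_NN t).div (hasDerivAt_DD t) hD.ne'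
    rw [show (fun t => NN t / DD t) = NN / DD from rfl, hder.deriv]
    have hnum : t * Real.sinh t * DD t - NN t * (2*Real.cosh (2*t) - 2)
        = 2 * Real.sinh t * (2*(Real.sinh t)^2 - t^2 - t*Real.sinh t*Real.cosh t) := by
      have hs2 : Real.sinh (2*t) = 2 * Real.sinh t * Real.cosh t := Real.sinh_two_mul t
      have hc2 : Real.cosh (2*t) = Real.cosh t ^ 2 + Real.sinh t ^ 2 := Real.cosh_two_mul t
      have hc := Real.cosh_sq_sub_sinh_sq t
      unfold NN DD
      rw [hs2, hc2]
      linear_combination (-2*(t*Real.cosh t - Real.sinh t))*hc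
    rw [hnum]
    have hQ := Q_neg ht
    have hs := Real.sinh_pos_iff.mpr ht
    have : 2 * Real.sinh t * (2*(Real.sinh t)^2 - t^2 - t*Real.sinh t*Real.cosh t) < 0 := by
      nlinarith
    exact div_neg_of_neg_of_pos this (by positivity)

lemma NN_lb {t : ℝ} (ht : 0 ≤ t) : t^3/3 ≤ NN t := by
  have hd : ∀ x : ℝ, HasDerivAt (fun x => NN x - x^3/3) (x * Real.sinh x - x^2) x := by
    intro x
    have h := (hasDerivAt_NN x).sub (((hasDerivAt_id' (x := x)).pow 3).div_const 3)
    refine h.congr_deriv ?_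
    ring
  have := nonneg_of_deriv_nonneg hd (by simp [NN]) (fun x hx => by
    rcases eq_or_lt_of_le hx with h | h
    · simp [← h]
    · have := Real.self_lt_sinh_iff.mpr h
      nlinarith) ht
  linarith

lemma continuous_psi : Continuous (psi ε) := by
  unfold psi NN DD
  fun_prop

lemma exists_m (hε0 : 0 < ε) (hε4 : ε < 1/4) :
    ∃ m, 0 < m ∧ psi ε m = 0 ∧ (∀ t, 0 < t → t < m → 0 < psi ε t) ∧
      (∀ t, m < t → psi ε t < 0) := by
  set t0 : ℝ := Real.sqrt ((1-4*ε)/8) with ht0def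
  have h18 : (0:ℝ) < (1-4*ε)/8 := by linarith
  have ht0 : 0 < t0 := Real.sqrt_pos.mpr h18
  have ht0sq : t0^2 = (1-4*ε)/8 := Real.sq_sqrt h18.le
  have h34 : (0:ℝ) < 3+4*ε := by linarith
  -- cosh bound at 2*t0
  have hcosh : Real.cosh (2*t0) ≤ 4/(3+4*ε) := by
    have hk := key1 (by linarith : (0:ℝ) ≤ 2*t0)
    have h4t : (2*t0)^2 = (1-4*ε)/2 := by rw [mul_pow]; rw [ht0sq]; ring
    rw [h4t] at hk
    rw [le_div_iff₀ h34]
    nlinarith [Real.one_le_cosh (2*t0)]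
  have hpsit0 : 0 < psi ε t0 := by
    have hN := NN_lb ht0.le
    have hD : DD t0 ≤ 4/3 * t0^3 * Real.cosh (2*t0) := by
      have := sinh_ub (by linarith : (0:ℝ) ≤ 2*t0)
      unfold DD
      nlinarith
    have hcp := Real.cosh_pos (2*t0)
    have ht03 : (0:ℝ) < t0^3 := by positivity
    have hub : ε * DD t0 ≤ ε * (4/3 * t0^3 * (4/(3+4*ε))) := by
      have h' : 4/3 * t0^3 * Real.cosh (2*t0) ≤ 4/3 * t0^3 * (4/(3+4*ε)) :=
        mul_le_mul_of_nonneg_left hcosh (by positivity)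
      nlinarith
    have hq : ε * (4/3 * t0^3 * (4/(3+4*ε))) = (16*ε/(3+4*ε)) * (t0^3/3) := by
      field_simp; ring
    have hq1 : 16*ε/(3+4*ε) < 1 := by
      rw [div_lt_one h34]; linarith
    have hfin : ε * (4/3 * t0^3 * (4/(3+4*ε))) < t0^3/3 := by
      rw [hq]
      calc (16*ε/(3+4*ε)) * (t0^3/3) < 1 * (t0^3/3) :=
            mul_lt_mul_of_pos_right hq1 (by positivity)
        _ = t0^3/3 := by ring
    unfold psi
    linarith
  obtain ⟨t1, ht1, ht1sq⟩ : ∃ t1, t0 < t1 ∧ 3/ε < t1^2 := by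
    refine ⟨max t0 (Real.sqrt (3/ε)) + 1, by
      have := le_max_left t0 (Real.sqrt (3/ε)); linarith, ?_⟩
    have h1 : Real.sqrt (3/ε) ≤ max t0 (Real.sqrt (3/ε)) := le_max_right _ _
    have h2 : Real.sqrt (3/ε) ^ 2 = 3/ε := Real.sq_sqrt (by positivity)
    have h0 : 0 ≤ max t0 (Real.sqrt (3/ε)) := le_trans (Real.sqrt_nonneg _) h1
    nlinarith [Real.sqrt_nonneg (3/ε)]
  have ht1pos : 0 < t1 := lt_trans ht0 ht1
  have hpsit1 : psi ε t1 < 0 := by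
    have hcp := Real.cosh_pos t1
    have hN : NN t1 ≤ t1 * Real.cosh t1 := by
      have := sinh_nonneg' ht1pos.le
      unfold NN; linarith
    have hD : t1^3/3 * Real.cosh t1 ≤ DD t1 := by
      have h1 := sinh_lb ht1pos.le
      have h2 := Real.one_le_cosh t1
      have hs2 : Real.sinh (2*t1) = 2 * Real.sinh t1 * Real.cosh t1 := Real.sinh_two_mul t1
      unfold DD
      rw [hs2]
      nlinarith [mul_nonneg (by linarith : (0:ℝ) ≤ Real.sinh t1 - t1 - t1^3/6) hcp.le,
        mul_nonneg ht1pos.le (by linarith : (0:ℝ) ≤ Real.cosh t1 - 1)]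
    have h3 : 3 < ε * t1^2 := by
      rw [div_lt_iff₀ hε0] at ht1sq; linarith
    have key : 0 < t1 * Real.cosh t1 * (ε * t1^2 - 3) :=
      mul_pos (mul_pos ht1pos hcp) (by linarith)
    have hlt : t1 * Real.cosh t1 < ε * (t1^3/3 * Real.cosh t1) := by nlinarith
    have hub : ε * (t1^3/3 * Real.cosh t1) ≤ ε * DD t1 :=
      mul_le_mul_of_nonneg_left hD hε0.le
    unfold psi
    linarith
  obtain ⟨m, hm, hpsim⟩ := intermediate_value_Ioo' ht1.le
    (continuous_psi.continuousOn) (by constructor <;> [exact hpsit1; exact hpsit0] :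
      (0:ℝ) ∈ Ioo (psi ε t1) (psi ε t0))
  have hm0 : 0 < m := lt_trans ht0 hm.1
  have hrhom : NN m = ε * DD m := by
    unfold psi at hpsim
    linarith
  refine ⟨m, hm0, hpsim, fun t htp htm => ?_, fun t htm => ?_⟩
  · have hD := DD_pos htp
    have hDm := DD_pos hm0
    have h' : NN m / DD m < NN t / DD t := rho_anti (mem_Ioi.mpr htp) (mem_Ioi.mpr hm0) htm
    rw [hrhom] at h'
    rw [mul_div_assoc, div_self hDm.ne', mul_one, lt_div_iff₀ hD] at h'
    unfold psi; linarith
  · have htpos : 0 < t := lt_trans hm0 htm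
    have hD := DD_pos htpos
    have hDm := DD_pos hm0
    have h' : NN t / DD t < NN m / DD m := rho_anti (mem_Ioi.mpr hm0) (mem_Ioi.mpr htpos) htm
    rw [hrhom] at h'
    rw [mul_div_assoc, div_self hDm.ne', mul_one, div_lt_iff₀ hD] at h'
    unfold psi; linarith


lemma tcpp_sub_cp (hε0 : 0 < ε) (t : ℝ) :
    t * cpp ε t - cp ε t = 2*ε*psi ε t/(dd ε t)^2 := by
  have hd := (dd_pos hε0 t).ne'
  unfold cpp cp psi NN DD dd
  rw [Real.sinh_two_mul]
  unfold dd at hd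
  field_simp
  ring

lemma hasDerivAt_VV (hε0 : 0 < ε) (t : ℝ) :
    HasDerivAt (VV ε) (ε * psi ε t/(dd ε t)^2) t := by
  show HasDerivAt (fun t => t * cp ε t / 2 - cc ε t) _ t
  have h := (((hasDerivAt_id' (x := t)).mul (hasDerivAt_cp hε0 t)).div_const 2).sub
    (hasDerivAt_cc hε0 t)
  refine h.congr_deriv ?_
  have key := tcpp_sub_cp hε0 t
  linear_combination key/2

lemma hasDerivAt_ph (hε0 : 0 < ε) {t : ℝ} (ht : t ≠ 0) :
    HasDerivAt (ph ε) ((2*ε*psi ε t/(dd ε t)^2)/t^2) t := by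
  show HasDerivAt (fun t => cp ε t / t) _ t
  have h := (hasDerivAt_cp hε0 t).div (hasDerivAt_id' (x := t)) ht
  refine h.congr_deriv ?_
  have key := tcpp_sub_cp hε0 t
  linear_combination key/t^2

lemma hasDerivAt_hh (hε0 : 0 < ε) {t : ℝ} (ht : t ≠ 0) :
    HasDerivAt (hh ε) (2 * VV ε t/t^3) t := by
  show HasDerivAt (fun t => cc ε t / t^2) _ t
  have h := (hasDerivAt_cc hε0 t).div ((hasDerivAt_id' (x := t)).pow 2) (pow_ne_zero 2 ht)
  refine h.congr_deriv ?_
  simp only [Pi.pow_apply]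
  unfold VV
  field_simp
  ring

lemma cp_strictMono (hε0 : 0 < ε) : StrictMono (cp ε) := by
  refine strictMono_of_deriv_pos (fun x => ?_)
  rw [(hasDerivAt_cp hε0 x).deriv]
  exact cpp_pos hε0 x

lemma VV_zero : VV ε 0 = 0 := by simp [VV, cp_zero, cc_zero]

lemma cc_lb (hε0 : 0 < ε) {t : ℝ} (ht : 0 ≤ t) :
    t + Real.log ε - Real.log (1+2*ε) ≤ cc ε t := by
  have hcosh : Real.exp t / 2 ≤ Real.cosh t := by
    rw [Real.cosh_eq]
    have := Real.exp_pos (-t)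
    linarith
  have hdd : ε * Real.exp t ≤ dd ε t := by
    have h1 : 0 < Real.cosh t := Real.cosh_pos t
    unfold dd
    nlinarith
  have hlog : Real.log (ε * Real.exp t) ≤ Real.log (dd ε t) :=
    Real.log_le_log (by positivity) hdd
  rw [Real.log_mul hε0.ne' (Real.exp_pos t).ne', Real.log_exp] at hlog
  unfold cc
  linarith

lemma master (hε0 : 0 < ε) (hε4 : ε < 1/4) :
    ∃ tstar acrit : ℝ, 0 < tstar ∧ acrit = hh ε tstar ∧ 0 < acrit ∧
      ph ε tstar = 2*acrit ∧
      (∀ t, 0 < t → t ≠ tstar → hh ε t < acrit) ∧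
      (∀ t, tstar < t → VV ε t < 0) ∧
      StrictAntiOn (ph ε) (Ici tstar) ∧
      (∀ y, 0 < y → y ≤ 2*acrit → ∃ s, tstar ≤ s ∧ ph ε s = y) := by
  obtain ⟨m, hm0, hpsim, hpsipos, hpsineg⟩ := exists_m hε0 hε4
  have hVcont : Continuous (VV ε) :=
    continuous_iff_continuousAt.mpr (fun x => (hasDerivAt_VV hε0 x).continuousAt)
  have hVmono : StrictMonoOn (VV ε) (Icc 0 m) := by
    refine strictMonoOn_of_deriv_pos (convex_Icc 0 m) hVcont.continuousOn (fun x hx => ?_)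
    rw [interior_Icc] at hx
    rw [(hasDerivAt_VV hε0 x).deriv]
    exact div_pos (mul_pos hε0 (hpsipos x hx.1 hx.2)) (pow_pos (dd_pos hε0 x) 2)
  have hVanti : StrictAntiOn (VV ε) (Ici m) := by
    refine strictAntiOn_of_deriv_neg (convex_Ici m) hVcont.continuousOn (fun x hx => ?_)
    rw [interior_Ici] at hx
    rw [(hasDerivAt_VV hε0 x).deriv]
    exact div_neg_of_neg_of_pos (by nlinarith [hpsineg x hx]) (pow_pos (dd_pos hε0 x) 2)
  have hVm : 0 < VV ε m := by
    have := hVmono (Set.mem_Icc.mpr ⟨le_rfl, hm0.le⟩) (Set.mem_Icc.mpr ⟨hm0.le, le_rfl⟩) hm0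
    rwa [VV_zero] at this
  obtain ⟨T, hTm, h2L⟩ : ∃ T, m < T ∧
      2*(Real.log (1+2*ε) - Real.log ε) ≤ T - 1 := by
    refine ⟨max m (2*(Real.log (1+2*ε) - Real.log ε)) + 1, ?_, ?_⟩
    · have := le_max_left m (2*(Real.log (1+2*ε) - Real.log ε)); linarith
    · have := le_max_right m (2*(Real.log (1+2*ε) - Real.log ε)); linarith
  have hT0 : 0 < T := lt_trans hm0 hTm
  have hVT : VV ε T < 0 := by
    have hcc := cc_lb hε0 hT0.le
    have hcp := cp_lt_one hε0 T
    have hcpub : T * cp ε T ≤ T := by nlinarith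
    unfold VV
    linarith
  obtain ⟨tstar, hts, hVts⟩ := intermediate_value_Ioo' hTm.le hVcont.continuousOn
    (by constructor <;> [exact hVT; exact hVm] : (0:ℝ) ∈ Ioo (VV ε T) (VV ε m))
  have htsm : m < tstar := hts.1
  have hts0 : 0 < tstar := lt_trans hm0 htsm
  have hVpos : ∀ t, 0 < t → t < tstar → 0 < VV ε t := by
    intro t ht htlt
    rcases le_or_gt t m with h | h
    · rcases eq_or_lt_of_le h with h' | h'
      · rw [h']; exact hVm
      · have := hVmono (Set.mem_Icc.mpr ⟨le_rfl, hm0.le⟩) (Set.mem_Icc.mpr ⟨ht.le, h⟩) ht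
        rwa [VV_zero] at this
    · have := hVanti (Set.mem_Ici.mpr h.le) (Set.mem_Ici.mpr htsm.le) htlt
      rwa [hVts] at this
  have hVneg : ∀ t, tstar < t → VV ε t < 0 := by
    intro t htlt
    have := hVanti (Set.mem_Ici.mpr htsm.le) (Set.mem_Ici.mpr (htsm.trans htlt).le) htlt
    rwa [hVts] at this
  have hhmono : StrictMonoOn (hh ε) (Ioc 0 tstar) := by
    refine strictMonoOn_of_deriv_pos (convex_Ioc 0 tstar)
      (fun x hx => ((hasDerivAt_hh hε0 (ne_of_gt hx.1)).continuousAt).continuousWithinAt)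
      (fun x hx => ?_)
    rw [interior_Ioc] at hx
    rw [(hasDerivAt_hh hε0 (ne_of_gt hx.1)).deriv]
    exact div_pos (by linarith [hVpos x hx.1 hx.2]) (pow_pos hx.1 3)
  have hhanti : StrictAntiOn (hh ε) (Ici tstar) := by
    refine strictAntiOn_of_deriv_neg (convex_Ici tstar)
      (fun x hx => ((hasDerivAt_hh hε0 (ne_of_gt (lt_of_lt_of_le hts0 hx))).continuousAt).continuousWithinAt)
      (fun x hx => ?_)
    rw [interior_Ici] at hx
    rw [(hasDerivAt_hh hε0 (ne_of_gt (lt_trans hts0 hx))).deriv]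
    exact div_neg_of_neg_of_pos (by linarith [hVneg x hx]) (pow_pos (lt_trans hts0 hx) 3)
  have hacrit : 0 < hh ε tstar := div_pos (cc_pos hε0 hts0.ne') (pow_pos hts0 2)
  have hphts : ph ε tstar = 2*(hh ε tstar) := by
    unfold VV at hVts
    unfold ph hh
    field_simp
    linear_combination 2*hVts
  have hhlt : ∀ t, 0 < t → t ≠ tstar → hh ε t < hh ε tstar := by
    intro t ht hne
    rcases lt_or_gt_of_ne hne with h | h
    · exact hhmono (Set.mem_Ioc.mpr ⟨ht, h.le⟩) (Set.mem_Ioc.mpr ⟨hts0, le_rfl⟩) h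
    · exact hhanti (Set.mem_Ici.mpr le_rfl) (Set.mem_Ici.mpr h.le) h
  have hphanti : StrictAntiOn (ph ε) (Ici tstar) := by
    have hanti : StrictAntiOn (ph ε) (Ici m) := by
      refine strictAntiOn_of_deriv_neg (convex_Ici m)
        (fun x hx => ((hasDerivAt_ph hε0 (ne_of_gt (lt_of_lt_of_le hm0 hx))).continuousAt).continuousWithinAt)
        (fun x hx => ?_)
      rw [interior_Ici] at hx
      have hx0 : 0 < x := lt_trans hm0 hx
      rw [(hasDerivAt_ph hε0 hx0.ne').deriv]
      refine div_neg_of_neg_of_pos (div_neg_of_neg_of_pos ?_ (pow_pos (dd_pos hε0 x) 2))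
        (pow_pos hx0 2)
      nlinarith [hpsineg x hx]
    exact hanti.mono (Ici_subset_Ici.mpr htsm.le)
  have hsol : ∀ y, 0 < y → y ≤ 2*(hh ε tstar) → ∃ s, tstar ≤ s ∧ ph ε s = y := by
    intro y hy0 hy2
    obtain ⟨T', hT'ts, hT'y⟩ : ∃ T', tstar ≤ T' ∧ 1/y < T' := by
      refine ⟨max tstar (1/y) + 1, ?_, ?_⟩
      · have := le_max_left tstar (1/y); linarith
      · have := le_max_right tstar (1/y); linarith
    have hT'0 : 0 < T' := lt_of_lt_of_le hts0 hT'ts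
    have hphT' : ph ε T' < y := by
      have h1 : ph ε T' < 1/T' := by
        unfold ph
        rw [div_lt_div_iff₀ hT'0 hT'0]
        nlinarith [cp_lt_one hε0 T']
      have h2 : 1/T' < y := by
        rw [div_lt_iff₀ hT'0]
        have := (div_lt_iff₀ hy0).mp hT'y
        nlinarith
      linarith
    have hcont : ContinuousOn (ph ε) (Icc tstar T') := fun x hx =>
      ((hasDerivAt_ph hε0 (ne_of_gt (lt_of_lt_of_le hts0 hx.1))).continuousAt).continuousWithinAt
    have hmem : y ∈ Icc (ph ε T') (ph ε tstar) := by
      constructor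
      · exact hphT'.le
      · rw [hphts]; exact hy2
    obtain ⟨s, hs, hps⟩ := intermediate_value_Icc' hT'ts hcont hmem
    exact ⟨s, hs.1, hps⟩
  exact ⟨tstar, hh ε tstar, hts0, rfl, hacrit, hphts, hhlt, hVneg, hphanti, hsol⟩



lemma hh_even (t : ℝ) : hh ε (-t) = hh ε t := by simp [hh, cc_even]

lemma FF_even (a t : ℝ) : FF ε a (-t) = FF ε a t := by simp [FF, cc_even]

lemma hasDerivAt_FF (hε0 : 0 < ε) (a t : ℝ) :
    HasDerivAt (FF ε a) (2*a*t - cp ε t) t := by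
  show HasDerivAt (fun t => a * t^2 - cc ε t) _ t
  have h := (((hasDerivAt_id' (x := t)).pow 2).const_mul a).sub (hasDerivAt_cc hε0 t)
  refine h.congr_deriv ?_
  simp
  ring

lemma FF_hh {a t : ℝ} (ht : t ≠ 0) : FF ε a t = t^2*(a - hh ε t) := by
  unfold FF hh
  field_simp

lemma FF_VV {a t : ℝ} (ht : t ≠ 0) :
    FF ε a t = (a - ph ε t/2)*t^2 + VV ε t := by
  unfold FF ph VV
  field_simp
  ring

lemma FF_zero' (a : ℝ) : FF ε a 0 = 0 := by simp [FF, cc_zero]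

section FFmin

variable {ε tstar acrit : ℝ}

lemma FF_nonneg_of_ge (hts0 : 0 < tstar) (hacrit_eq : acrit = hh ε tstar)
    (hhlt : ∀ t, 0 < t → t ≠ tstar → hh ε t < acrit)
    {a : ℝ} (ha : acrit ≤ a) {t : ℝ} (ht : t ≠ 0) : 0 ≤ FF ε a t := by
  have habs : 0 < |t| := abs_pos.mpr ht
  have hhle : hh ε t ≤ acrit := by
    rcases abs_cases t with ⟨h1, _⟩ | ⟨h1, _⟩
    · rcases eq_or_ne t tstar with h | h
      · rw [h, ← hacrit_eq]
      · exact (hhlt t (by rwa [h1] at habs) h).le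
    · rw [← hh_even]
      rcases eq_or_ne (-t) tstar with h | h
      · rw [h, ← hacrit_eq]
      · exact (hhlt (-t) (by rwa [h1] at habs) h).le
  rw [FF_hh ht]
  have ht2 : (0:ℝ) < t^2 := by positivity
  nlinarith

lemma FF_pos_of_gt (hts0 : 0 < tstar) (hacrit_eq : acrit = hh ε tstar)
    (hhlt : ∀ t, 0 < t → t ≠ tstar → hh ε t < acrit)
    {a : ℝ} (ha : acrit < a) {t : ℝ} (ht : t ≠ 0) : 0 < FF ε a t := by
  have := FF_nonneg_of_ge hts0 hacrit_eq hhlt (le_refl acrit) ht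
  rw [FF_hh ht] at this ⊢
  have ht2 : (0:ℝ) < t^2 := by positivity
  nlinarith

lemma FF_pos_of_crit (hhlt : ∀ t, 0 < t → t ≠ tstar → hh ε t < acrit)
    {t : ℝ} (ht : t ≠ 0) (h1 : t ≠ tstar) (h2 : t ≠ -tstar) :
    0 < FF ε acrit t := by
  have habs : 0 < |t| := abs_pos.mpr ht
  have hhlt' : hh ε t < acrit := by
    rcases abs_cases t with ⟨hc, _⟩ | ⟨hc, _⟩
    · exact hhlt t (by rwa [hc] at habs) h1
    · rw [← hh_even]
      refine hhlt (-t) (by rwa [hc] at habs) ?_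
      intro hcon
      exact h2 (by linarith [hcon] : t = -tstar)
  rw [FF_hh ht]
  have ht2 : (0:ℝ) < t^2 := by positivity
  nlinarith

lemma FF_zero_crit (hts0 : 0 < tstar) (hacrit_eq : acrit = hh ε tstar) :
    FF ε acrit tstar = 0 := by
  rw [FF_hh hts0.ne', hacrit_eq]
  ring

/-- minimizer set for `a > acrit` -/
lemma minF_sub (hts0 : 0 < tstar) (hacrit_eq : acrit = hh ε tstar)
    (hhlt : ∀ t, 0 < t → t ≠ tstar → hh ε t < acrit)
    {a : ℝ} (ha : acrit < a) :
    {t : ℝ | ∀ w, FF ε a t ≤ FF ε a w} = {0} := by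
  ext t
  simp only [Set.mem_setOf_eq, Set.mem_singleton_iff]
  constructor
  · intro hmin
    by_contra ht
    have h1 := hmin 0
    rw [FF_zero'] at h1
    exact absurd h1 (not_le.mpr (FF_pos_of_gt hts0 hacrit_eq hhlt ha ht))
  · intro ht w
    rw [ht, FF_zero']
    rcases eq_or_ne w 0 with h | h
    · rw [h, FF_zero']
    · exact (FF_pos_of_gt hts0 hacrit_eq hhlt ha h).le

/-- minimizer set for `a = acrit` -/
lemma minF_crit (hts0 : 0 < tstar) (hacrit_eq : acrit = hh ε tstar)
    (hhlt : ∀ t, 0 < t → t ≠ tstar → hh ε t < acrit) :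
    {t : ℝ | ∀ w, FF ε acrit t ≤ FF ε acrit w} = {0, tstar, -tstar} := by
  have hFz := FF_zero' (ε := ε) acrit
  have hFts := FF_zero_crit hts0 hacrit_eq
  have hFmts : FF ε acrit (-tstar) = 0 := by rw [FF_even]; exact hFts
  have hmin : ∀ w, (0:ℝ) ≤ FF ε acrit w := by
    intro w
    rcases eq_or_ne w 0 with h | h
    · rw [h, hFz]
    · exact FF_nonneg_of_ge hts0 hacrit_eq hhlt le_rfl h
  ext t
  simp only [Set.mem_setOf_eq, Set.mem_insert_iff, Set.mem_singleton_iff]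
  constructor
  · intro hminm
    by_contra hcon
    push_neg at hcon
    obtain ⟨h0, h1, h2⟩ := hcon
    have := hminm 0
    rw [hFz] at this
    exact absurd this (not_le.mpr (FF_pos_of_crit hhlt h0 h1 h2))
  · intro ht w
    have hFt : FF ε acrit t = 0 := by
      rcases ht with h | h | h <;> rw [h]
      · exact hFz
      · exact hFts
      · exact hFmts
    rw [hFt]
    exact hmin w

end FFmin



lemma cp_eq_ph_mul {t : ℝ} (ht : t ≠ 0) : cp ε t = ph ε t * t := by
  unfold ph
  field_simp

lemma minF_sup (hε0 : 0 < ε) (hts0 : 0 < tstar) (hacrit_eq : acrit = hh ε tstar)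
    (hhlt : ∀ t, 0 < t → t ≠ tstar → hh ε t < acrit)
    (hVneg : ∀ t, tstar < t → VV ε t < 0)
    (hphanti : StrictAntiOn (ph ε) (Ici tstar))
    (hphts : ph ε tstar = 2*acrit)
    {a s : ℝ} (ha0 : 0 < a) (ha : a < acrit) (hs : tstar ≤ s) (hps : ph ε s = 2*a) :
    FF ε a s < 0 ∧ {t : ℝ | ∀ w, FF ε a t ≤ FF ε a w} = {s, -s} := by
  have hss : tstar < s := by
    rcases eq_or_lt_of_le hs with h | h
    · exfalso
      rw [← h, hphts] at hps
      linarith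
    · exact h
  have hs0 : 0 < s := lt_trans hts0 hss
  have hFsneg : FF ε a s < 0 := by
    have heq : FF ε a s = VV ε s := by
      rw [FF_VV hs0.ne', hps]
      ring
    rw [heq]
    exact hVneg s hss
  have hFcont : Continuous (FF ε a) :=
    continuous_iff_continuousAt.mpr (fun x => (hasDerivAt_FF hε0 a x).continuousAt)
  have hFanti : StrictAntiOn (FF ε a) (Icc tstar s) := by
    refine strictAntiOn_of_deriv_neg (convex_Icc tstar s) hFcont.continuousOn (fun x hx => ?_)
    rw [interior_Icc] at hx
    have hx0 : 0 < x := lt_trans hts0 hx.1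
    rw [(hasDerivAt_FF hε0 a x).deriv, cp_eq_ph_mul hx0.ne']
    have hph : ph ε s < ph ε x :=
      hphanti (Set.mem_Ici.mpr hx.1.le) (Set.mem_Ici.mpr hs) hx.2
    rw [hps] at hph
    nlinarith
  have hFmono : StrictMonoOn (FF ε a) (Ici s) := by
    refine strictMonoOn_of_deriv_pos (convex_Ici s) hFcont.continuousOn (fun x hx => ?_)
    rw [interior_Ici] at hx
    have hx0 : 0 < x := lt_trans hs0 hx
    rw [(hasDerivAt_FF hε0 a x).deriv, cp_eq_ph_mul hx0.ne']
    have hph : ph ε x < ph ε s :=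
      hphanti (Set.mem_Ici.mpr hs) (Set.mem_Ici.mpr (hs.trans hx.le)) hx
    rw [hps] at hph
    nlinarith
  have key : ∀ t, 0 < t → t ≠ s → FF ε a s < FF ε a t := by
    intro t ht hne
    rcases lt_or_gt_of_ne hne with h | h
    · rcases le_or_gt tstar t with h' | h'
      · exact hFanti (Set.mem_Icc.mpr ⟨h', h.le⟩) (Set.mem_Icc.mpr ⟨hs, le_rfl⟩) h
      · have hfs : FF ε a s < FF ε a tstar :=
          hFanti (Set.mem_Icc.mpr ⟨le_rfl, hs⟩) (Set.mem_Icc.mpr ⟨hs, le_rfl⟩) hss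
        have h1 : FF ε a tstar = tstar^2*(a - acrit) := by
          rw [FF_hh hts0.ne', ← hacrit_eq]
        have h2 : FF ε a t = FF ε acrit t + (a - acrit)*t^2 := by
          unfold FF; ring
        have h3 : 0 ≤ FF ε acrit t :=
          FF_nonneg_of_ge hts0 hacrit_eq hhlt le_rfl (ne_of_gt ht)
        have h4 : t^2 < tstar^2 := by nlinarith
        nlinarith
    · exact hFmono (Set.mem_Ici.mpr le_rfl) (Set.mem_Ici.mpr h.le) h
  have hle : ∀ w, FF ε a s ≤ FF ε a w := by
    intro w
    rcases lt_trichotomy w 0 with h | h | h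
    · have hev : FF ε a (-w) = FF ε a w := FF_even a w
      rw [← hev]
      rcases eq_or_ne (-w) s with h' | h'
      · rw [h']
      · exact (key (-w) (by linarith) h').le
    · rw [h, FF_zero']
      exact hFsneg.le
    · rcases eq_or_ne w s with h' | h'
      · rw [h']
      · exact (key w h h').le
  refine ⟨hFsneg, ?_⟩
  ext t
  simp only [Set.mem_setOf_eq, Set.mem_insert_iff, Set.mem_singleton_iff]
  constructor
  · intro hmin
    by_contra hcon
    push_neg at hcon
    obtain ⟨h1, h2⟩ := hcon
    have hts := hmin s
    rcases lt_trichotomy t 0 with h | h | h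
    · have hne : -t ≠ s := fun hc => h2 (by linarith)
      have := key (-t) (by linarith) hne
      rw [FF_even] at this
      linarith
    · rw [h, FF_zero'] at hts
      linarith
    · have := key t h h1
      linarith
  · intro ht w
    have : FF ε a t = FF ε a s := by
      rcases ht with h | h
      · rw [h]
      · rw [h, FF_even]
    rw [this]
    exact hle w



end BCaux

open BCaux Set in
/-- **First-order phase transition for the mean-field Blume–Capel model**
(Theorem 3.8 of Ellis–Otto–Touchette).  For `β > β_c = log 4` there exist a
critical value `K_c^{(1)}(β) > 0` and a function `K ↦ z(β,K)` such that:
(a) for `0 < K < K_c^{(1)}(β)` the set of global minimum points of `G_{β,K}` is `{0}`;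
(b) at `K = K_c^{(1)}(β)` it equals `{0, z, −z}` with `z = z(β,K_c^{(1)}(β)) > 0`;
(c) for `K > K_c^{(1)}(β)` it equals `{z(β,K), −z(β,K)}` with `z(β,K) > 0`;
(d) `z(β,K)` is positive, increasing and continuous for `K ≥ K_c^{(1)}(β)` and
tends to `z(β,K_c^{(1)}(β)) > 0` as `K → K_c^{(1)}(β)⁺` (discontinuous bifurcation). -/
theorem blume_capel_first_order (β : ℝ) (hβ : Real.log 4 < β) :
    ∃ Kc1 : ℝ, 0 < Kc1 ∧ ∃ zmin : ℝ → ℝ,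
      (∀ K : ℝ, 0 < K → K < Kc1 →
        {z : ℝ | ∀ w : ℝ, GBC β K z ≤ GBC β K w} = {0}) ∧
      (0 < zmin Kc1 ∧
        {z : ℝ | ∀ w : ℝ, GBC β Kc1 z ≤ GBC β Kc1 w} = {0, zmin Kc1, -(zmin Kc1)}) ∧
      (∀ K : ℝ, Kc1 < K →
        0 < zmin K ∧
        {z : ℝ | ∀ w : ℝ, GBC β K z ≤ GBC β K w} = {zmin K, -(zmin K)}) ∧
      (∀ K : ℝ, Kc1 ≤ K → 0 < zmin K) ∧
      StrictMonoOn zmin (Set.Ici Kc1) ∧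
      ContinuousOn zmin (Set.Ici Kc1) ∧
      Tendsto zmin (nhdsWithin Kc1 (Set.Ioi Kc1)) (nhds (zmin Kc1)) := by
  have hlog4 : (0:ℝ) < Real.log 4 := Real.log_pos (by norm_num)
  have hβ0 : 0 < β := lt_trans hlog4 hβ
  set ε : ℝ := Real.exp (-β) with hεdef
  have hε0 : 0 < ε := Real.exp_pos _
  have hε4 : ε < 1/4 := by
    rw [hεdef]
    have h1 : Real.exp (-β) < Real.exp (-Real.log 4) := Real.exp_lt_exp.mpr (by linarith)
    have h2 : Real.exp (-Real.log 4) = 1/4 := by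
      rw [Real.exp_neg, Real.exp_log (by norm_num : (0:ℝ) < 4)]
      norm_num
    linarith
  -- identification of cBC with cc
  have hcBC : ∀ t, cBC β t = cc ε t := by
    intro t
    unfold cBC cc dd
    have h1 : 1 + Real.exp (-β) * (Real.exp t + Real.exp (-t)) = 1 + 2*ε*Real.cosh t := by
      rw [Real.cosh_eq, hεdef]
      ring
    rw [h1]
    have h2 : (0:ℝ) < 1 + 2*ε*Real.cosh t := dd_pos hε0 t
    have h3 : (0:ℝ) < 1 + 2*ε := by linarith
    rw [Real.log_div h2.ne' h3.ne']
  -- master structure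
  obtain ⟨tstar, acrit, hts0, hacrit_eq, hacrit, hphts, hhlt, hVneg, hphanti, hsol⟩ :=
    master hε0 hε4
  -- the critical coupling
  set Kc1 : ℝ := 1/(4*β*acrit) with hKc1def
  have hKc1 : 0 < Kc1 := by rw [hKc1def]; positivity
  -- G-to-F transfer
  have hGF : ∀ K, 0 < K → ∀ z, GBC β K z = FF ε (1/(4*β*K)) (2*β*K*z) := by
    intro K hK z
    unfold GBC FF
    rw [hcBC]
    congr 1
    field_simp
    ring
  have hGset : ∀ K, 0 < K → {z : ℝ | ∀ w, GBC β K z ≤ GBC β K w} =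
      {z : ℝ | (2*β*K*z) ∈ {t : ℝ | ∀ u, FF ε (1/(4*β*K)) t ≤ FF ε (1/(4*β*K)) u}} := by
    intro K hK
    ext z
    simp only [Set.mem_setOf_eq]
    constructor
    · intro hz u
      have h1 := hz (u/(2*β*K))
      rw [hGF K hK z, hGF K hK (u/(2*β*K))] at h1
      rwa [(by field_simp : 2*β*K*(u/(2*β*K)) = u)] at h1
    · intro hz w
      rw [hGF K hK z, hGF K hK w]
      exact hz _
  classical
  -- the zmin function
  set Z : ℝ → ℝ := fun K => if h : ∃ s, tstar ≤ s ∧ ph ε s = 1/(2*β*K) then cp ε h.choose else 1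
    with hZdef
  -- solvability for K ≥ Kc1
  have hex : ∀ K, Kc1 ≤ K → ∃ s, tstar ≤ s ∧ ph ε s = 1/(2*β*K) := by
    intro K hK
    have hK0 : 0 < K := lt_of_lt_of_le hKc1 hK
    have hy0 : 0 < 1/(2*β*K) := by positivity
    have hy2 : 1/(2*β*K) ≤ 2*acrit := by
      rw [div_le_iff₀ (by positivity)]
      rw [hKc1def, div_le_iff₀ (by positivity)] at hK
      nlinarith
    exact hsol _ hy0 hy2
  -- uniqueness of the solution
  have huniq : ∀ K, ∀ s s', tstar ≤ s → tstar ≤ s' → ph ε s = 1/(2*β*K) →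
      ph ε s' = 1/(2*β*K) → s = s' := by
    intro K s s' hs hs' hp hp'
    exact hphanti.injOn (Set.mem_Ici.mpr hs) (Set.mem_Ici.mpr hs') (by rw [hp, hp'])
  -- characterization of Z
  have hZchar : ∀ K, Kc1 ≤ K → ∀ s, tstar ≤ s → ph ε s = 1/(2*β*K) → Z K = cp ε s := by
    intro K hK s hs hp
    have he := hex K hK
    rw [hZdef]
    simp only [dif_pos he]
    congr 1
    exact huniq K he.choose s he.choose_spec.1 hs he.choose_spec.2 hp
  -- each K ≥ Kc1 has its s
  have hZs : ∀ K, Kc1 ≤ K → ∃ s, tstar ≤ s ∧ ph ε s = 1/(2*β*K) ∧ Z K = cp ε s := by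
    intro K hK
    obtain ⟨s, hs, hp⟩ := hex K hK
    exact ⟨s, hs, hp, hZchar K hK s hs hp⟩
  -- Z at Kc1
  have h2acrit : 1/(2*β*Kc1) = 2*acrit := by
    rw [hKc1def]
    field_simp
    ring
  have hZKc1 : Z Kc1 = cp ε tstar := by
    refine hZchar Kc1 le_rfl tstar le_rfl ?_
    rw [h2acrit, hphts]
  have hZKc1pos : 0 < Z Kc1 := by
    rw [hZKc1]; exact cp_pos hε0 hts0
  -- positivity of Z on Ici Kc1
  have hZpos : ∀ K, Kc1 ≤ K → 0 < Z K := by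
    intro K hK
    obtain ⟨s, hs, hp, hZeq⟩ := hZs K hK
    rw [hZeq]
    exact cp_pos hε0 (lt_of_lt_of_le hts0 hs)
  -- strict monotonicity of Z
  have hZmono : StrictMonoOn Z (Set.Ici Kc1) := by
    intro K1 hK1 K2 hK2 hlt
    obtain ⟨s1, hs1, hp1, hZ1⟩ := hZs K1 hK1
    obtain ⟨s2, hs2, hp2, hZ2⟩ := hZs K2 hK2
    have hK10 : 0 < K1 := lt_of_lt_of_le hKc1 hK1
    have hK20 : 0 < K2 := lt_of_lt_of_le hKc1 hK2
    have hylt : 1/(2*β*K2) < 1/(2*β*K1) := by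
      apply div_lt_div_of_pos_left one_pos (by positivity)
      nlinarith
    have hslt : s1 < s2 := by
      by_contra hcon
      push_neg at hcon
      rcases eq_or_lt_of_le hcon with h | h
      · have heq : ph ε s2 = ph ε s1 := by rw [h]
        rw [hp1, hp2] at heq
        linarith
      · have := hphanti (Set.mem_Ici.mpr hs2) (Set.mem_Ici.mpr hs1) h
        rw [hp1, hp2] at this
        linarith
    rw [hZ1, hZ2]
    exact cp_strictMono hε0 hslt
  -- the bridge: every s ≥ tstar is realized
  have hbridge : ∀ s, tstar ≤ s → ∃ K, Kc1 ≤ K ∧ Z K = cp ε s := by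
    intro s hs
    have hs0 : 0 < s := lt_of_lt_of_le hts0 hs
    have hps : 0 < ph ε s := div_pos (cp_pos hε0 hs0) hs0
    refine ⟨1/(2*β*ph ε s), ?_, ?_⟩
    · rw [hKc1def]
      have hple : ph ε s ≤ 2*acrit := by
        rcases eq_or_lt_of_le hs with h | h
        · rw [← h, hphts]
        · exact (hphanti (Set.mem_Ici.mpr le_rfl) (Set.mem_Ici.mpr hs) h).le.trans
            (le_of_eq hphts)
      rw [div_le_div_iff₀ (by positivity) (by positivity)]
      nlinarith
    · refine hZchar _ ?_ s hs ?_
      · rw [hKc1def]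
        have hple : ph ε s ≤ 2*acrit := by
          rcases eq_or_lt_of_le hs with h | h
          · rw [← h, hphts]
          · exact (hphanti (Set.mem_Ici.mpr le_rfl) (Set.mem_Ici.mpr hs) h).le.trans
              (le_of_eq hphts)
        rw [div_le_div_iff₀ (by positivity) (by positivity)]
        nlinarith
      · rw [show 2*β*(1/(2*β*ph ε s)) = 1/ph ε s from by field_simp]
        rw [one_div_one_div]
  -- continuity of cp
  have hcpcont : Continuous (cp ε) :=
    continuous_iff_continuousAt.mpr (fun x => (hasDerivAt_cp hε0 x).continuousAt)
  -- the "exists between" conditions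
  have hfs_r : ∀ K, Kc1 ≤ K → ∀ b, Z K < b → ∃ c ∈ Set.Ici Kc1, Z c ∈ Ioc (Z K) b := by
    intro K hK b hb
    obtain ⟨s, hs, hp, hZeq⟩ := hZs K hK
    have hlt : cp ε s < cp ε (s+1) := cp_strictMono hε0 (by linarith)
    rcases le_or_gt (cp ε (s+1)) b with h | h
    · obtain ⟨K', hK', hZK'⟩ := hbridge (s+1) (by linarith)
      refine ⟨K', hK', ?_⟩
      rw [hZK']
      refine ⟨?_, h⟩
      rw [hZeq]
      exact hlt
    · have := intermediate_value_Icc (by linarith : s ≤ s+1) hcpcont.continuousOn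
      obtain ⟨s', hs', hcs'⟩ := this ⟨by rw [hZeq] at hb; linarith, h.le⟩
      obtain ⟨K', hK', hZK'⟩ := hbridge s' (le_trans hs hs'.1)
      refine ⟨K', hK', ?_⟩
      rw [hZK', hcs']
      exact ⟨hb, le_rfl⟩
  have hfs_l : ∀ K, Kc1 < K → ∀ b, b < Z K → ∃ c ∈ Set.Ici Kc1, Z c ∈ Ico b (Z K) := by
    intro K hK b hb
    obtain ⟨s, hs, hp, hZeq⟩ := hZs K hK.le
    rcases le_or_gt b (Z Kc1) with h | h
    · exact ⟨Kc1, self_mem_Ici, ⟨h, hZmono self_mem_Ici (Set.mem_Ici.mpr hK.le) hK⟩⟩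
    · have hmem : b ∈ Icc (cp ε tstar) (cp ε s) := by
        constructor
        · rw [← hZKc1]; exact h.le
        · rw [hZeq] at hb; exact hb.le
      obtain ⟨s', hs', hcs'⟩ := intermediate_value_Icc hs hcpcont.continuousOn hmem
      obtain ⟨K', hK', hZK'⟩ := hbridge s' hs'.1
      refine ⟨K', hK', ?_⟩
      rw [hZK', hcs']
      exact ⟨le_rfl, hb⟩
  have hZcont : ContinuousOn Z (Set.Ici Kc1) := by
    intro K hK
    rcases eq_or_lt_of_le (Set.mem_Ici.mp hK) with h | h
    · rw [← h]
      exact hZmono.continuousWithinAt_right_of_exists_between self_mem_nhdsWithin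
        (fun b hb => hfs_r Kc1 le_rfl b hb)
    · exact (hZmono.continuousAt_of_exists_between (Ici_mem_nhds h)
        (fun b hb => hfs_l K h b hb) (fun b hb => hfs_r K h.le b hb)).continuousWithinAt
  refine ⟨Kc1, hKc1, Z, ?_, ?_, ?_, fun K hK => hZpos K hK, hZmono, hZcont, ?_⟩
  -- part (a) : subcritical
  · intro K hK0 hKlt
    have haK : acrit < 1/(4*β*K) := by
      rw [lt_div_iff₀ (by positivity)]
      rw [hKc1def, lt_div_iff₀ (by positivity)] at hKlt
      nlinarith
    rw [hGset K hK0]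
    simp only [minF_sub hts0 hacrit_eq hhlt haK]
    ext z
    simp only [Set.mem_setOf_eq, Set.mem_singleton_iff]
    constructor
    · intro h
      exact (mul_eq_zero.mp h).resolve_left (by positivity : (0:ℝ) < 2*β*K).ne'
    · rintro rfl
      rw [mul_zero]
  -- part (b) : critical
  · have haK : 1/(4*β*Kc1) = acrit := by
      have h4 : 4*β*Kc1 = 1/acrit := by
        rw [hKc1def]
        field_simp
      rw [h4, one_div_one_div]
    have h1 : (2*β*Kc1) ≠ 0 := by positivity
    have hprod : (2*β*Kc1)*(2*acrit) = 1 := by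
      have := h2acrit
      field_simp at this ⊢
      linarith
    have hczc : 2*β*Kc1*(Z Kc1) = tstar := by
      rw [hZKc1, cp_eq_ph_mul hts0.ne', hphts]
      linear_combination tstar*hprod
    refine ⟨hZKc1pos, ?_⟩
    rw [hGset Kc1 hKc1]
    simp only [haK, minF_crit hts0 hacrit_eq hhlt]
    ext z
    simp only [Set.mem_setOf_eq, Set.mem_insert_iff, Set.mem_singleton_iff]
    constructor
    · rintro (h | h | h)
      · left
        exact (mul_eq_zero.mp h).resolve_left h1
      · right; left
        exact mul_left_cancel₀ h1 (h.trans hczc.symm)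
      · right; right
        apply mul_left_cancel₀ h1
        rw [h, ← hczc]
        ring
    · rintro (rfl | rfl | rfl)
      · left; rw [mul_zero]
      · right; left; exact hczc
      · right; right
        rw [← hczc]
        ring
  -- part (c) : supercritical
  · intro K hK
    have hK0 : 0 < K := lt_trans hKc1 hK
    have haK0 : (0:ℝ) < 1/(4*β*K) := by positivity
    have haKlt : 1/(4*β*K) < acrit := by
      rw [div_lt_iff₀ (by positivity)]
      rw [hKc1def, div_lt_iff₀ (by positivity)] at hK
      nlinarith
    obtain ⟨s, hs, hp, hZeq⟩ := hZs K hK.le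
    have hs0 : 0 < s := lt_of_lt_of_le hts0 hs
    have hp2 : ph ε s = 2*(1/(4*β*K)) := by
      rw [hp]
      field_simp
      ring
    obtain ⟨hFneg, hFset⟩ :=
      minF_sup hε0 hts0 hacrit_eq hhlt hVneg hphanti hphts haK0 haKlt hs hp2
    have h1 : (2*β*K) ≠ 0 := by positivity
    have hczs : 2*β*K*(Z K) = s := by
      rw [hZeq, cp_eq_ph_mul hs0.ne', hp]
      field_simp
    refine ⟨by rw [hZeq]; exact cp_pos hε0 hs0, ?_⟩
    rw [hGset K hK0]
    simp only [hFset]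
    ext z
    simp only [Set.mem_setOf_eq, Set.mem_insert_iff, Set.mem_singleton_iff]
    constructor
    · rintro (h | h)
      · left
        exact mul_left_cancel₀ h1 (h.trans hczs.symm)
      · right
        apply mul_left_cancel₀ h1
        rw [h, ← hczs]
        ring
    · rintro (rfl | rfl)
      · left; exact hczs
      · right
        rw [← hczs]
        ring
  -- part (d) : right-continuity at Kc1
  · exact (hZcont Kc1 self_mem_Ici).mono_left (nhdsWithin_mono Kc1 Ioi_subset_Ici_self)


end
end

section
/- Let β > 0 and K > 0 be such that 0 is the unique global minimum point of G_{β,K} on ℝ (equivalently, the set of equilibrium macrostates is {0}). Then S_n/n converges weakly to the point mass δ₀ under P_{n,β,K}: for every ε > 0, P_{n,β,K}(|S_n/n| ≥ ε) → 0 as n → ∞. -/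
open Filter

noncomputable section

/-- The three spin values `-1, 0, 1` of the Blume–Capel model. -/
def spinVal : Fin 3 → ℝ := ![(-1 : ℝ), 0, 1]

/-- Total spin `S_n(ω) = Σ_j ω_j`. -/
def Sn (n : ℕ) (ω : Fin n → Fin 3) : ℝ := ∑ i, spinVal (ω i)

/-- Blume–Capel Hamiltonian `H_{n,K}(ω) = Σ_j ω_j² − (K/n)(Σ_j ω_j)²`. -/
def Hn (n : ℕ) (K : ℝ) (ω : Fin n → Fin 3) : ℝ :=
  (∑ i, (spinVal (ω i)) ^ 2) - (K / n) * (Sn n ω) ^ 2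

/-- Partition function `Z_n(β,K)`. -/
def Zn (n : ℕ) (β K : ℝ) : ℝ := ∑ ω : Fin n → Fin 3, Real.exp (-β * Hn n K ω)

/-- `P_{n,β,K}(S_n/n ∈ A)` for a set `A ⊆ ℝ`. -/
def probBC (n : ℕ) (β K : ℝ) (A : Set ℝ) : ℝ :=
  (∑ ω : Fin n → Fin 3, A.indicator (fun _ => Real.exp (-β * Hn n K ω)) (Sn n ω / n)) /
    Zn n β K

/-! Exponential tilting.  On the fiber `S_n = n z` the Boltzmann weight factors as
`exp(t S_n − β Σ ω_j²) · exp(−n β K z²)` with `t = 2 β K z`, and summing the first factor over all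
configurations gives `(Λ e^{c_β(t)})^n` with `Λ = 1 + 2e^{−β}`.  Hence each fiber carries mass at
most `Λ^n e^{−n G_{β,K}(z)}`, while `Z_n ≥ Λ^n` because `βK ≥ 0`.  There are at most `2n + 1`
fibers, and by compactness `G_{β,K} ≥ δ > 0` on `ε ≤ |z| ≤ 1`, so
`P_{n,β,K}(|S_n/n| ≥ ε) ≤ (2n + 1) e^{−nδ}`. -/

open Real

lemma lt_of_setOf_isMin_eq_singleton {α β : Type*} [LinearOrder β] {f : α → β} {x₀ z : α}
    (h : {z | ∀ w, f z ≤ f w} = {x₀}) (hz : z ≠ x₀) : f x₀ < f z := by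
  have hx₀ : x₀ ∈ {z | ∀ w, f z ≤ f w} := h ▸ rfl
  have hz' : z ∉ {z | ∀ w, f z ≤ f w} := h ▸ hz
  obtain ⟨w, hw⟩ := not_forall.mp hz'
  exact (hx₀ w).trans_lt (not_le.mp hw)

lemma cBC_zero (β : ℝ) : cBC β 0 = 0 := by
  rw [cBC, exp_zero, neg_zero, exp_zero, one_add_one_eq_two, mul_comm (exp (-β)),
    div_self (by positivity), log_one]

lemma GBC_zero (β K : ℝ) : GBC β K 0 = 0 := by
  simp [GBC, cBC_zero]

lemma continuous_GBC (β K : ℝ) : Continuous (GBC β K) := by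
  unfold GBC cBC
  exact (by fun_prop : Continuous _).sub <| Continuous.log (by fun_prop) fun _ => by positivity

lemma sum_exp_spinVal (β t : ℝ) :
    ∑ a : Fin 3, exp (t * spinVal a - β * spinVal a ^ 2)
      = (1 + 2 * exp (-β)) * exp (cBC β t) := by
  rw [cBC, exp_log (by positivity), mul_div_cancel₀ _ (by positivity), Fin.sum_univ_three]
  simp only [spinVal, Matrix.cons_val_zero, Matrix.cons_val_one, Matrix.cons_val, mul_neg,
    mul_one, mul_zero, Even.neg_pow even_two, one_pow, zero_pow two_ne_zero, sub_self,
    sub_eq_add_neg, exp_add, exp_zero]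
  ring

lemma sum_exp_tilt (β t : ℝ) (n : ℕ) :
    ∑ ω : Fin n → Fin 3, exp (t * Sn n ω - β * ∑ i, spinVal (ω i) ^ 2)
      = ((1 + 2 * exp (-β)) * exp (cBC β t)) ^ n := by
  rw [← sum_exp_spinVal, Fintype.sum_pow]
  refine Finset.sum_congr rfl fun ω _ => ?_
  rw [← exp_sum, Sn, Finset.mul_sum, Finset.mul_sum, ← Finset.sum_sub_distrib]

lemma neg_mul_Hn (n : ℕ) (β K : ℝ) (ω : Fin n → Fin 3) :
    -β * Hn n K ω = -β * ∑ i, spinVal (ω i) ^ 2 + β * K / n * Sn n ω ^ 2 := by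
  rw [Hn]
  ring

lemma neg_mul_Hn_eq_tilt (n : ℕ) (β K : ℝ) (ω : Fin n → Fin 3) :
    -β * Hn n K ω = (2 * β * K * (Sn n ω / n) * Sn n ω - β * ∑ i, spinVal (ω i) ^ 2)
      - n * (β * K * (Sn n ω / n) ^ 2) := by
  rw [neg_mul_Hn]
  rcases eq_or_ne n 0 with rfl | hn
  · simp [Sn]
  · field_simp
    ring

lemma Zn_pos (n : ℕ) (β K : ℝ) : 0 < Zn n β K :=
  Finset.sum_pos (fun _ _ => exp_pos _) Finset.univ_nonempty

lemma pow_le_Zn (n : ℕ) {β K : ℝ} (hβK : 0 ≤ β * K) : (1 + 2 * exp (-β)) ^ n ≤ Zn n β K := by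
  have h := sum_exp_tilt β 0 n
  rw [cBC_zero, exp_zero, mul_one] at h
  rw [← h, Zn]
  refine Finset.sum_le_sum fun ω _ => exp_le_exp.mpr ?_
  rw [neg_mul_Hn, zero_mul]
  have : 0 ≤ β * K / n * Sn n ω ^ 2 := by positivity
  linarith

lemma sum_fiber_exp_le (n : ℕ) (β K z : ℝ) :
    ∑ ω ∈ Finset.univ.filter (fun ω : Fin n → Fin 3 => Sn n ω / n = z), exp (-β * Hn n K ω)
      ≤ (1 + 2 * exp (-β)) ^ n * exp (-(n * GBC β K z)) := by
  calc ∑ ω ∈ Finset.univ.filter (fun ω : Fin n → Fin 3 => Sn n ω / n = z), exp (-β * Hn n K ω)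
      = ∑ ω ∈ Finset.univ.filter (fun ω : Fin n → Fin 3 => Sn n ω / n = z),
          exp (2 * β * K * z * Sn n ω - β * ∑ i, spinVal (ω i) ^ 2) *
            exp (-(n * (β * K * z ^ 2))) := by
        refine Finset.sum_congr rfl fun ω hω => ?_
        rw [neg_mul_Hn_eq_tilt, (Finset.mem_filter.mp hω).2, sub_eq_add_neg, exp_add]
    _ ≤ ∑ ω : Fin n → Fin 3,
          exp (2 * β * K * z * Sn n ω - β * ∑ i, spinVal (ω i) ^ 2) *
            exp (-(n * (β * K * z ^ 2))) :=
        Finset.sum_le_sum_of_subset_of_nonneg (Finset.filter_subset _ _)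
          fun _ _ _ => by positivity
    _ = (1 + 2 * exp (-β)) ^ n * exp (-(n * GBC β K z)) := by
        rw [← Finset.sum_mul, sum_exp_tilt, mul_pow, ← exp_nat_mul, mul_assoc, ← exp_add, GBC]
        ring_nf

lemma spinVal_eq_intCast (a : Fin 3) : spinVal a = ((a.val - 1 : ℤ) : ℝ) := by
  fin_cases a <;> simp [spinVal]

lemma abs_spinVal_le_one (a : Fin 3) : |spinVal a| ≤ 1 := by
  fin_cases a <;> simp [spinVal]

lemma abs_Sn_le (n : ℕ) (ω : Fin n → Fin 3) : |Sn n ω| ≤ n :=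
  calc |Sn n ω| ≤ ∑ i, |spinVal (ω i)| := Finset.abs_sum_le_sum_abs _ _
    _ ≤ ∑ _i : Fin n, (1 : ℝ) := Finset.sum_le_sum fun i _ => abs_spinVal_le_one (ω i)
    _ = n := by simp

lemma exists_intCast_eq_Sn (n : ℕ) (ω : Fin n → Fin 3) : ∃ k : ℤ, (k : ℝ) = Sn n ω :=
  ⟨∑ i, ((ω i).val - 1 : ℤ), by push_cast [Sn, spinVal_eq_intCast]; rfl⟩

def magnetizationValues (n : ℕ) : Finset ℝ :=
  (Finset.Icc (-(n : ℤ)) n).image fun k : ℤ => (k : ℝ) / n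

lemma Sn_div_mem_magnetizationValues (n : ℕ) (ω : Fin n → Fin 3) :
    Sn n ω / n ∈ magnetizationValues n := by
  obtain ⟨k, hk⟩ := exists_intCast_eq_Sn n ω
  have hkn : |k| ≤ (n : ℤ) := by
    have := abs_Sn_le n ω
    rw [← hk] at this
    exact_mod_cast this
  exact Finset.mem_image.mpr ⟨k, Finset.mem_Icc.mpr (abs_le.mp hkn), by rw [hk]⟩

lemma card_magnetizationValues_le (n : ℕ) : ((magnetizationValues n).card : ℝ) ≤ 2 * n + 1 := by
  have h : (Finset.Icc (-(n : ℤ)) n).card = 2 * n + 1 := by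
    rw [Int.card_Icc]
    omega
  exact_mod_cast h ▸ Finset.card_image_le

lemma abs_le_one_of_mem_magnetizationValues {n : ℕ} {z : ℝ} (hz : z ∈ magnetizationValues n) :
    |z| ≤ 1 := by
  obtain ⟨k, hk, rfl⟩ := Finset.mem_image.mp hz
  have hkn : |(k : ℝ)| ≤ n := by
    rw [← Int.cast_abs]
    exact_mod_cast abs_le.mpr (Finset.mem_Icc.mp hk)
  rw [abs_div, Nat.abs_cast]
  exact div_le_one_of_le₀ hkn n.cast_nonneg

lemma sum_indicator_exp_le (n : ℕ) (β K δ : ℝ) (A : Set ℝ)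
    (hδ : ∀ z ∈ A, |z| ≤ 1 → δ ≤ GBC β K z) :
    ∑ ω : Fin n → Fin 3, A.indicator (fun _ => exp (-β * Hn n K ω)) (Sn n ω / n)
      ≤ (2 * n + 1) * ((1 + 2 * exp (-β)) ^ n * exp (-(n * δ))) := by
  rw [← Finset.sum_fiberwise_of_maps_to fun ω _ => Sn_div_mem_magnetizationValues n ω]
  calc ∑ z ∈ magnetizationValues n, ∑ ω ∈ Finset.univ.filter (fun ω => Sn n ω / n = z),
        A.indicator (fun _ => exp (-β * Hn n K ω)) (Sn n ω / n)
      ≤ ∑ _z ∈ magnetizationValues n, (1 + 2 * exp (-β)) ^ n * exp (-(n * δ)) :=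
        Finset.sum_le_sum fun z hz => ?_
    _ ≤ (2 * n + 1) * ((1 + 2 * exp (-β)) ^ n * exp (-(n * δ))) := by
        rw [Finset.sum_const, nsmul_eq_mul]
        exact mul_le_mul_of_nonneg_right (card_magnetizationValues_le n) (by positivity)
  by_cases hzA : z ∈ A
  · calc _ = ∑ ω ∈ Finset.univ.filter (fun ω => Sn n ω / n = z), exp (-β * Hn n K ω) :=
          Finset.sum_congr rfl fun ω hω => by
            rw [(Finset.mem_filter.mp hω).2, Set.indicator_of_mem hzA]
      _ ≤ (1 + 2 * exp (-β)) ^ n * exp (-(n * GBC β K z)) := sum_fiber_exp_le n β K z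
      _ ≤ (1 + 2 * exp (-β)) ^ n * exp (-(n * δ)) := by
          have := hδ z hzA (abs_le_one_of_mem_magnetizationValues hz)
          gcongr
  · calc _ = ∑ ω ∈ Finset.univ.filter (fun ω => Sn n ω / n = z), (0 : ℝ) :=
          Finset.sum_congr rfl fun ω hω => by
            rw [(Finset.mem_filter.mp hω).2, Set.indicator_of_notMem hzA]
      _ ≤ (1 + 2 * exp (-β)) ^ n * exp (-(n * δ)) := by
          rw [Finset.sum_const_zero]
          positivity

lemma probBC_nonneg (n : ℕ) (β K : ℝ) (A : Set ℝ) : 0 ≤ probBC n β K A :=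
  div_nonneg (Finset.sum_nonneg fun _ _ => Set.indicator_nonneg (fun _ _ => (exp_pos _).le) _)
    (Zn_pos n β K).le

lemma probBC_le {β K : ℝ} (hβK : 0 ≤ β * K) (δ : ℝ) (A : Set ℝ)
    (hδ : ∀ z ∈ A, |z| ≤ 1 → δ ≤ GBC β K z) (n : ℕ) :
    probBC n β K A ≤ (2 * n + 1) * exp (-(n * δ)) := by
  have hΛ : 0 < (1 + 2 * exp (-β)) ^ n := by positivity
  calc probBC n β K A ≤ (2 * n + 1) * ((1 + 2 * exp (-β)) ^ n * exp (-(n * δ)))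
        / (1 + 2 * exp (-β)) ^ n :=
        div_le_div₀ (by positivity) (sum_indicator_exp_le n β K δ A hδ) hΛ (pow_le_Zn n hβK)
    _ = (2 * n + 1) * exp (-(n * δ)) := by
        field_simp

lemma tendsto_two_mul_add_one_mul_exp_neg_mul {δ : ℝ} (hδ : 0 < δ) :
    Tendsto (fun n : ℕ => (2 * n + 1 : ℝ) * exp (-(n * δ))) atTop (nhds 0) := by
  have hr0 : 0 ≤ exp (-δ) := (exp_pos _).le
  have hr1 : exp (-δ) < 1 := exp_lt_one_iff.mpr (neg_lt_zero.mpr hδ)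
  have h := ((tendsto_self_mul_const_pow_of_lt_one hr0 hr1).const_mul 2).add
    (tendsto_pow_atTop_nhds_zero_of_lt_one hr0 hr1)
  rw [mul_zero, add_zero] at h
  refine h.congr fun n => ?_
  rw [← exp_nat_mul]
  ring_nf

/-- **Weak convergence of the magnetization to `δ₀`** (part (a) of Theorem 6.5 of
Ellis–Otto–Touchette).  If `0` is the unique global minimum point of `G_{β,K}`
(equivalently, the set of equilibrium macrostates is `{0}`), then
`P_{n,β,K}(|S_n/n| ≥ ε) → 0` as `n → ∞` for every `ε > 0`. -/
theorem blume_capel_weak_convergence (β K : ℝ) (hβ : 0 < β) (hK : 0 < K)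
    (hmin : {z : ℝ | ∀ w : ℝ, GBC β K z ≤ GBC β K w} = {0}) :
    ∀ ε : ℝ, 0 < ε →
      Tendsto (fun n : ℕ => probBC n β K {x : ℝ | ε ≤ |x|}) atTop (nhds 0) := by
  intro ε hε
  have hG_pos : ∀ z ≠ 0, 0 < GBC β K z := fun z hz =>
    GBC_zero β K ▸ lt_of_setOf_isMin_eq_singleton hmin hz
  have hcompact : IsCompact ({x : ℝ | ε ≤ |x|} ∩ Set.Icc (-1) 1) :=
    isCompact_Icc.inter_left (isClosed_le continuous_const continuous_abs)
  obtain ⟨δ, hδ, hδG⟩ := hcompact.exists_forall_le' (continuous_GBC β K).continuousOn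
    fun z hz => hG_pos z (abs_pos.mp (hε.trans_le hz.1))
  exact squeeze_zero (fun n => probBC_nonneg n β K _)
    (probBC_le (mul_pos hβ hK).le δ _ (fun z hz hz1 => hδG z ⟨hz, abs_le.mp hz1⟩))
    (tendsto_two_mul_add_one_mul_exp_neg_mul hδ)
end
end

section
/- There exists a constant C > 0 (depending only on q, H, and β) such that for all n ≥ 1, every configuration σ ∈ Λ^n, every vertex i ∈ {1,…,n}, and every k ∈ {1,…,q}, the Glauber update probability satisfies | P(σ → σ_{i,e^k}) − [∂_kΓ]( −β∇H(L_n(σ)) − (β/(2n)) 𝒬H(L_n(σ)) + (β/n) ⟨σ_i, 𝒬H(L_n(σ))⟩ σ_i ) | ≤ C/n², where 𝒬F(z) := (∂₁²F(z), ∂₂²F(z), …, ∂_q²F(z)) for F : ℝ^q → ℝ of class C². -/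
/-!
The update probabilities are the softmax `gammaGrad` of the logits `-βn H(L_n(σ_{i,e^l}))`.
Moving spin `i` from `σ_i` to `e^l` changes only the coordinates `l` and `σ_i` of `L_n(σ)`, by
`±1/n`, so since `H` splits into coordinates, second-order Taylor expansions of `H_l` and
`H_{σ_i}` (whose third derivatives are bounded on `[0, 1]`) show that, up to an additive constant
independent of `l`, these logits agree with the argument of `gammaGrad` in the statement to within
`O(1/n²)`. Softmax is invariant under constant shifts and moves by at most `2ε e^{2ε}` when its
logits move by at most `ε`.
-/

noncomputable section

/-- Empirical measure (magnetization vector): `L_n(ω)_k = (1/n)Σ_i 1{ω_i = e^k}`. -/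
def empMeas (q n : ℕ) (ω : Fin n → Fin q) (k : Fin q) : ℝ :=
  (∑ i : Fin n, if ω i = k then (1 : ℝ) else 0) / n

/-- Interaction representation function of coordinate-split form
`H(z) = H₁(z₁) + … + H_q(z_q)`. -/
def Hsplit (q : ℕ) (Hk : Fin q → ℝ → ℝ) (z : Fin q → ℝ) : ℝ := ∑ k, Hk k (z k)

/-- The Glauber update probability
`P(σ → σ_{i,e^k}) = exp(−βn H(L_n(σ_{i,e^k}))) / Σ_ℓ exp(−βn H(L_n(σ_{i,e^ℓ})))`. -/
def updProb (q : ℕ) (Hk : Fin q → ℝ → ℝ) (β : ℝ) (n : ℕ)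
    (σ : Fin n → Fin q) (i : Fin n) (k : Fin q) : ℝ :=
  Real.exp (-β * n * Hsplit q Hk (empMeas q n (Function.update σ i k))) /
    ∑ l : Fin q, Real.exp (-β * n * Hsplit q Hk (empMeas q n (Function.update σ i l)))

/-- `[∂_kΓ](z) = e^{z_k}/Σ_j e^{z_j}`, the gradient of the log moment generating
function `Γ(z) = log((1/q)Σ_k e^{z_k})`. -/
def gammaGrad (q : ℕ) (z : Fin q → ℝ) (k : Fin q) : ℝ :=
  Real.exp (z k) / ∑ j : Fin q, Real.exp (z j)

open Real Set

lemma Real.exp_sub_one_le_mul_exp (x : ℝ) : exp x - 1 ≤ x * exp x := by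
  have h := add_one_le_exp (-x)
  have h' : exp (-x) * exp x = 1 := by rw [← exp_add, neg_add_cancel, exp_zero]
  nlinarith [exp_pos x]

section Softmax

variable {q : ℕ}

lemma sum_exp_pos (z : Fin q → ℝ) (k : Fin q) : 0 < ∑ j, exp (z j) :=
  Finset.sum_pos (fun j _ => exp_pos (z j)) ⟨k, Finset.mem_univ k⟩

lemma gammaGrad_le_one (z : Fin q → ℝ) (k : Fin q) : gammaGrad q z k ≤ 1 :=
  div_le_one_of_le₀ (Finset.single_le_sum (fun j _ => (exp_pos (z j)).le) (Finset.mem_univ k))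
    (sum_exp_pos z k).le

lemma gammaGrad_add_const (z : Fin q → ℝ) (c : ℝ) (k : Fin q) :
    gammaGrad q (fun l => z l + c) k = gammaGrad q z k := by
  simp only [gammaGrad, exp_add, ← Finset.sum_mul]
  exact mul_div_mul_right _ _ (exp_ne_zero c)

lemma gammaGrad_le_exp_mul {a b : Fin q → ℝ} {ε : ℝ} (hab : ∀ l, |a l - b l| ≤ ε) (k : Fin q) :
    gammaGrad q a k ≤ exp (2 * ε) * gammaGrad q b k := by
  have hup : ∀ l, exp (a l) ≤ exp ε * exp (b l) := fun l => by
    rw [← exp_add]; exact exp_le_exp.2 (by linarith [(abs_le.1 (hab l)).2])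
  have hlow : ∀ l, exp (b l) ≤ exp ε * exp (a l) := fun l => by
    rw [← exp_add]; exact exp_le_exp.2 (by linarith [(abs_le.1 (hab l)).1])
  rw [gammaGrad, gammaGrad, ← mul_div_assoc, div_le_div_iff₀ (sum_exp_pos a k) (sum_exp_pos b k)]
  calc exp (a k) * ∑ j, exp (b j)
      ≤ (exp ε * exp (b k)) * (exp ε * ∑ j, exp (a j)) := by
        refine mul_le_mul (hup k) ?_ (sum_exp_pos b k).le (by positivity)
        rw [Finset.mul_sum]
        exact Finset.sum_le_sum fun j _ => hlow j
    _ = exp (2 * ε) * exp (b k) * ∑ j, exp (a j) := by rw [two_mul, exp_add]; ring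

lemma abs_gammaGrad_sub_le {a b : Fin q → ℝ} {c ε : ℝ} (hab : ∀ l, |a l - b l - c| ≤ ε)
    (k : Fin q) : |gammaGrad q a k - gammaGrad q b k| ≤ 2 * ε * exp (2 * ε) := by
  rw [← gammaGrad_add_const b c k]
  have hab' : ∀ l, |a l - (b l + c)| ≤ ε := fun l => by rw [← sub_sub]; exact hab l
  have h₁ := gammaGrad_le_exp_mul hab' k
  have h₂ := gammaGrad_le_exp_mul (fun l => abs_sub_comm (a l) _ ▸ hab' l) k
  have hexp : 1 ≤ exp (2 * ε) := one_le_exp (by linarith [(abs_nonneg _).trans (hab k)])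
  refine (abs_sub_le_iff.2 ⟨?_, ?_⟩).trans (exp_sub_one_le_mul_exp (2 * ε))
  · nlinarith [gammaGrad_le_one (fun l => b l + c) k]
  · nlinarith [gammaGrad_le_one a k]

end Softmax

lemma abs_taylor_two_le {f : ℝ → ℝ} (hf : ContDiff ℝ 3 f) {a b M : ℝ}
    (hM : ∀ t ∈ Icc a b, |iteratedDeriv 3 f t| ≤ M) {x y : ℝ} (hx : x ∈ Icc a b)
    (hy : y ∈ Icc a b) :
    |f y - (f x + deriv f x * (y - x) + deriv (deriv f) x * (y - x) ^ 2 / 2)|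
      ≤ M * |y - x| ^ 3 / 6 := by
  rcases eq_or_ne x y with rfl | hxy
  · simp
  obtain ⟨t, ht, hrem⟩ := taylor_mean_remainder_lagrange_iteratedDeriv hxy hf.contDiffOn
  have hderiv : ∀ k ≤ 3, iteratedDerivWithin k f (uIcc x y) x = iteratedDeriv k f x :=
    fun k hk => iteratedDerivWithin_eq_iteratedDeriv (uniqueDiffOn_uIcc hxy)
      (hf.contDiffAt.of_le (by exact_mod_cast hk)) left_mem_uIcc
  have htaylor : taylorWithinEval f 2 (uIcc x y) x y
      = f x + deriv f x * (y - x) + deriv (deriv f) x * (y - x) ^ 2 / 2 := by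
    simp only [taylor_within_apply, Finset.sum_range_succ, Finset.range_zero, Finset.sum_empty,
      hderiv 0 (by norm_num), hderiv 1 (by norm_num), hderiv 2 (by norm_num), iteratedDeriv_zero,
      iteratedDeriv_succ, smul_eq_mul]
    norm_num [Nat.factorial]
    ring
  have htM : |iteratedDeriv 3 f t| ≤ M := hM t (uIcc_subset_Icc hx hy (uIoo_subset_uIcc_self ht))
  rw [← htaylor, hrem, abs_div, abs_mul, abs_pow]
  norm_num [Nat.factorial]
  gcongr

lemma exists_forall_abs_iteratedDeriv_le {ι : Type*} [Finite ι] {f : ι → ℝ → ℝ} {m : ℕ}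
    (hf : ∀ k, ContDiff ℝ m (f k)) {K : Set ℝ} (hK : IsCompact K) :
    ∃ M, 0 ≤ M ∧ ∀ k, ∀ t ∈ K, |iteratedDeriv m (f k) t| ≤ M := by
  choose M hM using fun k =>
    hK.exists_bound_of_continuousOn ((hf k).continuous_iteratedDeriv m le_rfl).continuousOn
  obtain ⟨B, hB⟩ := Finite.exists_le M
  exact ⟨max B 0, le_max_right _ _,
    fun k t ht => (hM k t ht).trans ((hB k).trans (le_max_left _ _))⟩

section empMeas

variable {q n : ℕ}

lemma empMeas_mem_Icc (σ : Fin n → Fin q) (m : Fin q) : empMeas q n σ m ∈ Icc 0 1 := by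
  refine ⟨by unfold empMeas; positivity, div_le_one_of_le₀ ?_ n.cast_nonneg⟩
  calc (∑ i : Fin n, if σ i = m then (1 : ℝ) else 0) ≤ ∑ _i : Fin n, (1 : ℝ) :=
        Finset.sum_le_sum fun i _ => by split_ifs <;> norm_num
    _ = n := by simp

lemma empMeas_update (σ : Fin n → Fin q) (i : Fin n) (l m : Fin q) :
    empMeas q n (Function.update σ i l) m =
      empMeas q n σ m + ((if l = m then (1 : ℝ) else 0) - (if σ i = m then 1 else 0)) / n := by
  unfold empMeas
  rw [← add_div, ← Finset.add_sum_erase _ _ (Finset.mem_univ i),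
    ← Finset.add_sum_erase _ _ (Finset.mem_univ i), Function.update_self]
  rw [Finset.sum_congr rfl fun j hj => by rw [Function.update_of_ne (Finset.ne_of_mem_erase hj)]]
  ring

lemma empMeas_update_of_ne {σ : Fin n → Fin q} {i : Fin n} {l : Fin q} (hl : l ≠ σ i) :
    empMeas q n (Function.update σ i l) l = empMeas q n σ l + 1 / n ∧
      empMeas q n (Function.update σ i l) (σ i) = empMeas q n σ (σ i) - 1 / n ∧
      ∀ m, m ≠ l → m ≠ σ i → empMeas q n (Function.update σ i l) m = empMeas q n σ m := by
  refine ⟨?_, ?_, fun m hml hms => ?_⟩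
  · simp [empMeas_update, hl.symm]
  · simp [empMeas_update, hl, sub_eq_add_neg, neg_div]
  · simp [empMeas_update, Ne.symm hml, Ne.symm hms]

end empMeas

lemma Hsplit_sub_of_eq_off_pair {q : ℕ} (Hk : Fin q → ℝ → ℝ) {z w : Fin q → ℝ} {a b : Fin q}
    (hab : a ≠ b) (h : ∀ m, m ≠ a → m ≠ b → w m = z m) :
    Hsplit q Hk w - Hsplit q Hk z = (Hk a (w a) - Hk a (z a)) + (Hk b (w b) - Hk b (z b)) := by
  unfold Hsplit
  rw [← Finset.sum_sub_distrib, ← Finset.sum_pair hab (f := fun m => Hk m (w m) - Hk m (z m))]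
  refine (Finset.sum_subset (Finset.subset_univ _) fun m _ hm => ?_).symm
  simp only [Finset.mem_insert, Finset.mem_singleton, not_or] at hm
  rw [h m hm.1 hm.2, sub_self]

/-- `updProb q Hk β n σ i` is, by definition, `gammaGrad q (updLogit q Hk β n σ i)`. -/
def updLogit (q : ℕ) (Hk : Fin q → ℝ → ℝ) (β : ℝ) (n : ℕ) (σ : Fin n → Fin q) (i : Fin n)
    (l : Fin q) : ℝ :=
  -β * n * Hsplit q Hk (empMeas q n (Function.update σ i l))

/-- The argument of `gammaGrad` in `glauber_update_expansion`:
`-β∇H(L_n(σ)) - (β/2n) 𝒬H(L_n(σ)) + (β/n) ⟨σ_i, 𝒬H(L_n(σ))⟩ σ_i`. -/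
def approxUpdLogit (q : ℕ) (Hk : Fin q → ℝ → ℝ) (β : ℝ) (n : ℕ) (σ : Fin n → Fin q) (i : Fin n)
    (m : Fin q) : ℝ :=
  -β * deriv (Hk m) (empMeas q n σ m)
    - (β / (2 * n)) * deriv (deriv (Hk m)) (empMeas q n σ m)
    + (β / n) * deriv (deriv (Hk (σ i))) (empMeas q n σ (σ i)) * (if m = σ i then 1 else 0)

section logits

variable {q : ℕ} {Hk : Fin q → ℝ → ℝ} (β : ℝ) {M : ℝ} {n : ℕ} (σ : Fin n → Fin q) (i : Fin n)

lemma updLogit_sub_approxUpdLogit_of_ne (hf : ∀ m, ContDiff ℝ 3 (Hk m))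
    (hM : ∀ m, ∀ t ∈ Icc (0 : ℝ) 1, |iteratedDeriv 3 (Hk m) t| ≤ M) {l : Fin q} (hl : l ≠ σ i) :
    |updLogit q Hk β n σ i l - approxUpdLogit q Hk β n σ i l
        - (updLogit q Hk β n σ i (σ i) - approxUpdLogit q Hk β n σ i (σ i))|
      ≤ |β| * M / 3 / n ^ 2 := by
  set s := σ i
  set L := empMeas q n σ
  have hn : (n : ℝ) ≠ 0 := Nat.cast_ne_zero.2 i.pos.ne'
  obtain ⟨hl', hs', hrest⟩ := empMeas_update_of_ne hl
  have hH := Hsplit_sub_of_eq_off_pair Hk hl hrest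
  have hr₁ := abs_taylor_two_le (hf l) (hM l) (empMeas_mem_Icc σ l)
    (empMeas_mem_Icc (Function.update σ i l) l)
  have hr₂ := abs_taylor_two_le (hf s) (hM s) (empMeas_mem_Icc σ s)
    (empMeas_mem_Icc (Function.update σ i l) s)
  rw [hl'] at hH hr₁
  rw [hs'] at hH hr₂
  rw [add_sub_cancel_left] at hr₁
  rw [sub_sub_cancel_left, abs_neg] at hr₂
  set r₁ := Hk l (L l + 1 / n) - (Hk l (L l) + deriv (Hk l) (L l) * (1 / n)
    + deriv (deriv (Hk l)) (L l) * (1 / n) ^ 2 / 2)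
  set r₂ := Hk s (L s - 1 / n) - (Hk s (L s) + deriv (Hk s) (L s) * -(1 / n)
    + deriv (deriv (Hk s)) (L s) * (-(1 / n)) ^ 2 / 2)
  -- the Taylor polynomials of `-βn ΔH` reproduce the difference of the `approxUpdLogit`s
  have hexpand : updLogit q Hk β n σ i l - approxUpdLogit q Hk β n σ i l
      - (updLogit q Hk β n σ i s - approxUpdLogit q Hk β n σ i s) = -(β * n) * (r₁ + r₂) := by
    rw [sub_eq_iff_eq_add] at hH
    simp only [updLogit, approxUpdLogit, s, L, r₁, r₂, Function.update_eq_self, if_neg hl,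
      if_true, hH]
    field_simp
    ring
  have hn₀ : (0 : ℝ) < n := by positivity
  rw [hexpand]
  rw [abs_of_pos (one_div_pos.2 hn₀)] at hr₁ hr₂
  calc |-(β * n) * (r₁ + r₂)| = |β| * n * |r₁ + r₂| := by
        rw [abs_mul, abs_neg, abs_mul, abs_of_pos hn₀]
    _ ≤ |β| * n * (M * (1 / n) ^ 3 / 6 + M * (1 / n) ^ 3 / 6) := by
        gcongr; exact (abs_add_le _ _).trans (add_le_add hr₁ hr₂)
    _ = |β| * M / 3 / n ^ 2 := by field_simp; ring

lemma abs_updLogit_sub_approxUpdLogit_le (hf : ∀ m, ContDiff ℝ 3 (Hk m))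
    (hM : ∀ m, ∀ t ∈ Icc (0 : ℝ) 1, |iteratedDeriv 3 (Hk m) t| ≤ M) (l : Fin q) :
    |updLogit q Hk β n σ i l - approxUpdLogit q Hk β n σ i l
        - (updLogit q Hk β n σ i (σ i) - approxUpdLogit q Hk β n σ i (σ i))|
      ≤ |β| * M / 3 / n ^ 2 := by
  rcases eq_or_ne l (σ i) with rfl | hl
  · have hM₀ : 0 ≤ M := (abs_nonneg _).trans (hM (σ i) 0 ⟨le_rfl, zero_le_one⟩)
    rw [sub_self, abs_zero]
    positivity
  · exact updLogit_sub_approxUpdLogit_of_ne β σ i hf hM hl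

end logits

theorem glauber_update_expansion_general (q : ℕ) (β : ℝ)
    (Hk : Fin q → ℝ → ℝ) (hC3 : ∀ k, ContDiff ℝ 3 (Hk k)) :
    ∃ C : ℝ, 0 < C ∧ ∀ n : ℕ, 1 ≤ n → ∀ (σ : Fin n → Fin q) (i : Fin n) (k : Fin q),
      |updProb q Hk β n σ i k -
        gammaGrad q
          (fun m =>
            -β * deriv (Hk m) (empMeas q n σ m)
              - (β / (2 * n)) * deriv (deriv (Hk m)) (empMeas q n σ m)
              + (β / n) * deriv (deriv (Hk (σ i))) (empMeas q n σ (σ i)) *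
                  (if m = σ i then 1 else 0))
          k| ≤ C / n ^ 2 := by
  obtain ⟨M, hM₀, hM⟩ := exists_forall_abs_iteratedDeriv_le hC3 (isCompact_Icc (a := 0) (b := 1))
  set ε := |β| * M / 3
  refine ⟨2 * ε * exp (2 * ε) + 1, by positivity, fun n hn σ i k => ?_⟩
  have hn₂ : (1 : ℝ) ≤ n ^ 2 := one_le_pow₀ (by exact_mod_cast hn)
  calc _ ≤ 2 * (ε / n ^ 2) * exp (2 * (ε / n ^ 2)) :=
        abs_gammaGrad_sub_le (abs_updLogit_sub_approxUpdLogit_le β σ i hC3 hM) k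
    _ ≤ 2 * ε * exp (2 * ε) / n ^ 2 := by
        rw [← mul_div_assoc, div_mul_eq_mul_div]
        gcongr
        exact div_le_self (by positivity) hn₂
    _ ≤ (2 * ε * exp (2 * ε) + 1) / n ^ 2 := by gcongr; linarith

/-- **Expansion of the Glauber update probabilities** (Lemma 6.4 in the survey).
For `H(z) = ΣH_k(z_k)` concave and `C³`, there is `C > 0` such that for all
`n ≥ 1`, `σ ∈ Λ^n`, vertex `i` and `k ∈ {1,…,q}`,
`|P(σ → σ_{i,e^k}) − [∂_kΓ](−β∇H(L_n(σ)) − (β/2n)𝒬H(L_n(σ)) + (β/n)⟨σ_i,𝒬H(L_n(σ))⟩σ_i)| ≤ C/n²`,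
where `𝒬H(z) = (∂₁²H(z),…,∂_q²H(z))`. -/
theorem glauber_update_expansion (q : ℕ) (hq : 2 ≤ q) (β : ℝ) (hβ : 0 < β)
    (Hk : Fin q → ℝ → ℝ) (hC3 : ∀ k, ContDiff ℝ 3 (Hk k))
    (hconc : ∀ k, ConcaveOn ℝ Set.univ (Hk k)) :
    ∃ C : ℝ, 0 < C ∧ ∀ n : ℕ, 1 ≤ n → ∀ (σ : Fin n → Fin q) (i : Fin n) (k : Fin q),
      |updProb q Hk β n σ i k -
        gammaGrad q
          (fun m =>
            -β * deriv (Hk m) (empMeas q n σ m)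
              - (β / (2 * n)) * deriv (deriv (Hk m)) (empMeas q n σ m)
              + (β / n) * deriv (deriv (Hk (σ i))) (empMeas q n σ (σ i)) *
                  (if m = σ i then 1 else 0))
          k| ≤ C / n ^ 2 :=
  glauber_update_expansion_general q β Hk hC3

end
end

section
/- Fix integers q ≥ 2, r ≥ 2 and β > 0. Suppose there exists u ∈ (0,1] such that u < (1 − e^{Δ(u)})/(1 + (q−1)e^{Δ(u)}), where Δ(u) = −(β/q^{r−1})[(1 + (q−1)u)^{r−1} − (1−u)^{r−1}]. Then there exists z ∈ P with z₁ > 1/q and g₁^r(z) > z₁; in particular β ≥ β_s(q,r). (This is the content of the inequality β_s(q,r) ≤ β_c(q,r), since for every β above the critical value β_c(q,r) such a u exists.) -/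
/-!
Test the threshold on the point `z` with `z₁ = (1 + (q-1)u)/q` and all other coordinates
`(1-u)/q`. There `g₁^r(z) = 1/(1 + (q-1)e^{Δ(u)})`, so the hypothesis on `u` says exactly
`z₁ < g₁^r(z)`. Since `Δ(u)` is linear in `β` with non-positive slope, `g₁^r(z)` only grows
with `β`, so no `β' ≥ β` satisfies the defining condition of `β_s(q,r)`.
-/

noncomputable section

/-- The probability simplex in `ℝ^q`. -/
def simplexP (q : ℕ) : Set (Fin q → ℝ) :=
  {ν | (∀ k, 0 ≤ ν k) ∧ ∑ k, ν k = 1}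

/-- `g_k^r(z) = e^{β z_k^{r−1}} / Σ_j e^{β z_j^{r−1}}` for the generalized
Curie–Weiss–Potts model. -/
def gGCWP (q r : ℕ) (β : ℝ) (z : Fin q → ℝ) (k : Fin q) : ℝ :=
  Real.exp (β * z k ^ (r - 1)) / ∑ j : Fin q, Real.exp (β * z j ^ (r - 1))

/-- The rapid mixing threshold
`β_s(q,r) = sup{β ≥ 0 : g_k^r(z) < z_k for all z ∈ P and k with z_k ∈ (1/q,1]}`. -/
def betaS (q r : ℕ) : ℝ :=
  sSup {b : ℝ | 0 ≤ b ∧ ∀ z ∈ simplexP q, ∀ k : Fin q,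
    z k ∈ Set.Ioc (1 / (q : ℝ)) 1 → gGCWP q r b z k < z k}

/-- `Δ(u) = −(β/q^{r−1})[(1 + (q−1)u)^{r−1} − (1−u)^{r−1}]`. -/
def deltaGCWP (q r : ℕ) (β u : ℝ) : ℝ :=
  -(β / (q : ℝ) ^ (r - 1)) * ((1 + ((q : ℝ) - 1) * u) ^ (r - 1) - (1 - u) ^ (r - 1))

open Real Set

section

variable {q : ℕ}

def magnetizedPoint (k : Fin q) (u : ℝ) : Fin q → ℝ :=
  fun j => if j = k then (1 + (q - 1) * u) / q else (1 - u) / q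

@[simp]
lemma magnetizedPoint_self (k : Fin q) (u : ℝ) :
    magnetizedPoint k u k = (1 + (q - 1) * u) / q :=
  if_pos rfl

lemma sum_magnetizedPoint (k : Fin q) (u : ℝ) (f : ℝ → ℝ) :
    ∑ j, f (magnetizedPoint k u j) = f ((1 + (q - 1) * u) / q) + (q - 1) * f ((1 - u) / q) := by
  rw [← Finset.add_sum_erase _ _ (Finset.mem_univ k), magnetizedPoint_self,
    Finset.sum_congr rfl fun j hj => by rw [magnetizedPoint, if_neg (Finset.ne_of_mem_erase hj)]]
  simp [Finset.card_erase_of_mem, Nat.cast_pred k.pos]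

lemma magnetizedPoint_mem_simplexP (k : Fin q) {u : ℝ} (hu : u ∈ Icc 0 1) :
    magnetizedPoint k u ∈ simplexP q := by
  have hq : (1 : ℝ) ≤ q := by exact_mod_cast k.pos
  refine ⟨fun j => ?_, ?_⟩
  · unfold magnetizedPoint
    split_ifs <;> apply div_nonneg <;> nlinarith [hu.1, hu.2]
  · refine (sum_magnetizedPoint k u id).trans ?_
    simp only [id]
    field_simp
    ring

lemma magnetizedPoint_self_mem_Ioc (hq : 2 ≤ q) (k : Fin q) {u : ℝ} (hu : u ∈ Ioc 0 1) :
    magnetizedPoint k u k ∈ Ioc (1 / (q : ℝ)) 1 := by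
  have hq' : (2 : ℝ) ≤ q := by exact_mod_cast hq
  rw [magnetizedPoint_self, mem_Ioc, div_lt_div_iff_of_pos_right (by linarith),
    div_le_one (by linarith)]
  constructor <;> nlinarith [hu.1, hu.2]

lemma deltaGCWP_eq_sub (k : Fin q) (r : ℕ) (β u : ℝ) :
    deltaGCWP q r β u =
      β * ((1 - u) / q) ^ (r - 1) - β * ((1 + (q - 1) * u) / q) ^ (r - 1) := by
  have hq : (q : ℝ) ≠ 0 := by exact_mod_cast k.pos.ne'
  rw [deltaGCWP, div_pow, div_pow]
  field_simp
  ring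

lemma deltaGCWP_antitone (r : ℕ) {u : ℝ} (hu : u ∈ Icc 0 1) :
    Antitone fun β => deltaGCWP q r β u := by
  intro β β' h
  have hbracket : (1 - u) ^ (r - 1) ≤ (1 + (q - 1) * u) ^ (r - 1) := by
    apply pow_le_pow_left₀ (by linarith [hu.2])
    nlinarith [hu.1, show (0 : ℝ) ≤ q from q.cast_nonneg]
  simp only [deltaGCWP, neg_mul, neg_le_neg_iff]
  gcongr

lemma gGCWP_magnetizedPoint_self (k : Fin q) (r : ℕ) (β u : ℝ) :
    gGCWP q r β (magnetizedPoint k u) k = 1 / (1 + (q - 1) * exp (deltaGCWP q r β u)) := by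
  have hexp : exp (β * ((1 - u) / q) ^ (r - 1)) =
      exp (β * ((1 + (q - 1) * u) / q) ^ (r - 1)) * exp (deltaGCWP q r β u) := by
    rw [← exp_add, deltaGCWP_eq_sub k]
    ring_nf
  rw [gGCWP, sum_magnetizedPoint k u fun x => exp (β * x ^ (r - 1)), magnetizedPoint_self, hexp]
  field_simp

lemma gGCWP_magnetizedPoint_self_monotone (k : Fin q) (r : ℕ) {u : ℝ} (hu : u ∈ Icc 0 1) :
    Monotone fun β => gGCWP q r β (magnetizedPoint k u) k := by
  intro β β' h
  have hq : (0 : ℝ) ≤ q - 1 := by linarith [show (1 : ℝ) ≤ q by exact_mod_cast k.pos]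
  simp only [gGCWP_magnetizedPoint_self]
  gcongr
  exact deltaGCWP_antitone r hu h

lemma magnetizedPoint_self_lt_gGCWP_self_iff (hq : 2 ≤ q) (k : Fin q) (r : ℕ) (β u : ℝ) :
    magnetizedPoint k u k < gGCWP q r β (magnetizedPoint k u) k ↔
      u < (1 - exp (deltaGCWP q r β u)) / (1 + (q - 1) * exp (deltaGCWP q r β u)) := by
  have hq' : (2 : ℝ) ≤ q := by exact_mod_cast hq
  have hE := exp_pos (deltaGCWP q r β u)
  have hD : 0 < 1 + (q - 1) * exp (deltaGCWP q r β u) := by nlinarith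
  rw [gGCWP_magnetizedPoint_self, magnetizedPoint_self, div_lt_div_iff₀ (by linarith) hD,
    lt_div_iff₀ hD]
  constructor <;> intro h <;> nlinarith

lemma betaS_le_of_forall_lt_le_gGCWP {r : ℕ} {β : ℝ} (hβ : 0 ≤ β) {z : Fin q → ℝ}
    (hz : z ∈ simplexP q) {k : Fin q} (hzk : z k ∈ Ioc (1 / (q : ℝ)) 1)
    (hg : ∀ t, β < t → z k ≤ gGCWP q r t z k) :
    betaS q r ≤ β := by
  refine Real.sSup_le (fun t ⟨_, ht⟩ => ?_) hβ
  by_contra! hβt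
  exact (ht z hz k hzk).not_ge (hg t hβt)

end

/-- **`β_s(q,r) ≤ β_c(q,r)`** (Lemma 7.2 in the survey).  If there is
`u ∈ (0,1]` with `u < (1 − e^{Δ(u)})/(1 + (q−1)e^{Δ(u)})`, then there exists
`z ∈ P` with `z₁ > 1/q` and `g₁^r(z) > z₁`; in particular `β ≥ β_s(q,r)`. -/
theorem gcwp_betaS_le_betaC (q r : ℕ) (hq : 2 ≤ q)
    (β : ℝ) (hβ : 0 < β) (u : ℝ) (hu : u ∈ Set.Ioc (0 : ℝ) 1)
    (hineq : u < (1 - Real.exp (deltaGCWP q r β u)) /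
      (1 + ((q : ℝ) - 1) * Real.exp (deltaGCWP q r β u))) :
    (∃ z ∈ simplexP q,
      1 / (q : ℝ) < z (⟨0, by omega⟩ : Fin q) ∧
      z (⟨0, by omega⟩ : Fin q) < gGCWP q r β z (⟨0, by omega⟩ : Fin q)) ∧
    betaS q r ≤ β := by
  set k : Fin q := ⟨0, by omega⟩
  have hu' : u ∈ Icc 0 1 := Ioc_subset_Icc_self hu
  have hz := magnetizedPoint_mem_simplexP k hu'
  have hzk := magnetizedPoint_self_mem_Ioc hq k hu
  have hlt := (magnetizedPoint_self_lt_gGCWP_self_iff hq k r β u).mpr hineq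
  refine ⟨⟨_, hz, hzk.1, hlt⟩, betaS_le_of_forall_lt_le_gGCWP hβ.le hz hzk fun t ht => ?_⟩
  exact hlt.le.trans (gGCWP_magnetizedPoint_self_monotone k r hu' ht.le)

end
end
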